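/- arXiv:2111.08961 — 4 statements merged into one kernel-verified Lean document; each statement's English description precedes it below -/
import Mathlib

section
/- Frequent unitary kicks: Let H be a bounded self-adjoint operator on ℋ with ‖H‖ the operator norm, let (U_n)_{n≥1} be a sequence of unitaries on ℋ, and set V_n = U_n···U_1. Suppose H̄ is a bounded self-adjoint operator such that ‖(1/n)Σ_{j=1}^n V_j* H V_j − H̄‖ ≤ (θ/n^α)·‖H‖ for all integers n ≥ 1, for some θ ≥ 0 and α > 0. Set W_n(t) = U_{n+1}·exp(−i(t/n)H)·U_n·exp(−i(t/n)H)···U_2·exp(−i(t/n)H)·U_1. Then for all n ≥ 1 and t ≥ 0: ‖W_n(t) − V_{n+1}·exp(−i t H̄)‖ ≤ (θ/n^{α₁} + 2/n)·t‖H‖·(1 + 2t‖H‖), where α₁ = min{α, 1}. -/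
open MeasureTheory

variable {E : Type*} [NormedAddCommGroup E] [InnerProductSpace ℂ E] [CompleteSpace E]
  [TopologicalSpace.SeparableSpace E]

/-- The kicked product `U_{j+1} K U_j K ⋯ U_2 K U_1` with `j` copies of `K`
interspersed among the unitaries `U_1, …, U_{j+1}`. -/
noncomputable def kickedProd (U : ℕ → E →L[ℂ] E) (K : E →L[ℂ] E) : ℕ → E →L[ℂ] E
  | 0 => U 1
  | (j + 1) => U (j + 2) * K * kickedProd U K j

/-- The product `V_n = U_n ⋯ U_1` (with `V_0 = 1`). -/
noncomputable def unitaryProd (U : ℕ → E →L[ℂ] E) : ℕ → E →L[ℂ] E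
  | 0 => 1
  | (n + 1) => U (n + 1) * unitaryProd U n

set_option linter.unusedSectionVars false
set_option maxHeartbeats 2000000

namespace FUKaux

open NormedSpace Finset Complex

/-- forward product c 0 * c 1 * ⋯ * c (m-1) -/
noncomputable def fp (c : ℕ → E →L[ℂ] E) : ℕ → E →L[ℂ] E
  | 0 => 1
  | (m + 1) => fp c m * c m

/-- backward product a (m-1) * ⋯ * a 0 -/
noncomputable def ap (a : ℕ → E →L[ℂ] E) : ℕ → E →L[ℂ] E
  | 0 => 1
  | (m + 1) => a m * ap a m

lemma star_ap (a : ℕ → E →L[ℂ] E) (m : ℕ) :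
    star (ap a m) = fp (fun j => star (a j)) m := by
  induction m with
  | zero => simp [ap, fp]
  | succ m ih => simp [ap, fp, star_mul, ih]

lemma norm_one_le : ‖(1 : E →L[ℂ] E)‖ ≤ 1 := by
  rw [ContinuousLinearMap.one_def]; exact ContinuousLinearMap.norm_id_le

lemma unitary_norm_le' {u : E →L[ℂ] E} (hu : u ∈ unitary (E →L[ℂ] E)) : ‖u‖ ≤ 1 := by
  have h1 : star u * u = 1 := hu.1
  have h2 : ‖star u * u‖ = ‖u‖ * ‖u‖ := CStarRing.norm_star_mul_self
  rw [h1] at h2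
  nlinarith [norm_nonneg u, norm_one_le (E := E)]

lemma pow_norm_le {d : E →L[ℂ] E} (hd : ‖d‖ ≤ 1) (k : ℕ) : ‖d ^ k‖ ≤ 1 := by
  induction k with
  | zero => simpa using norm_one_le (E := E)
  | succ k ih =>
    rw [pow_succ]
    calc ‖d ^ k * d‖ ≤ ‖d ^ k‖ * ‖d‖ := norm_mul_le _ _
    _ ≤ 1 := mul_le_one₀ ih (norm_nonneg _) hd

lemma fp_norm_le {c : ℕ → E →L[ℂ] E} (hc : ∀ j, ‖c j‖ ≤ 1) (m : ℕ) : ‖fp c m‖ ≤ 1 := by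
  induction m with
  | zero => simpa [fp] using norm_one_le (E := E)
  | succ m ih =>
    calc ‖fp c (m+1)‖ ≤ ‖fp c m‖ * ‖c m‖ := norm_mul_le _ _
    _ ≤ 1 := mul_le_one₀ ih (norm_nonneg _) (hc m)

lemma norm_unitary_mul {u : E →L[ℂ] E} (hu : u ∈ unitary (E →L[ℂ] E)) (x : E →L[ℂ] E) :
    ‖u * x‖ = ‖x‖ := by
  refine le_antisymm ?_ ?_
  · calc ‖u * x‖ ≤ ‖u‖ * ‖x‖ := norm_mul_le _ _
    _ ≤ 1 * ‖x‖ := by gcongr; exact unitary_norm_le' hu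
    _ = ‖x‖ := one_mul _
  · calc ‖x‖ = ‖star u * (u * x)‖ := by rw [← mul_assoc, hu.1, one_mul]
    _ ≤ ‖star u‖ * ‖u * x‖ := norm_mul_le _ _
    _ ≤ 1 * ‖u * x‖ := by
        gcongr; rw [norm_star]; exact unitary_norm_le' hu
    _ = ‖u * x‖ := one_mul _

lemma norm_conj_le {v : E →L[ℂ] E} (hv : v ∈ unitary (E →L[ℂ] E)) (x : E →L[ℂ] E) :
    ‖star v * x * v‖ ≤ ‖x‖ := by
  have h1 : ‖star v‖ ≤ 1 := by rw [norm_star]; exact unitary_norm_le' hv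
  calc ‖star v * x * v‖ ≤ ‖star v * x‖ * ‖v‖ := norm_mul_le _ _
  _ ≤ (‖star v‖ * ‖x‖) * ‖v‖ := by gcongr; exact norm_mul_le _ _
  _ ≤ (1 * ‖x‖) * 1 := by gcongr <;> first | exact h1 | exact unitary_norm_le' hv
  _ = ‖x‖ := by ring

lemma norm_mul3_le (x y z : E →L[ℂ] E) : ‖x * y * z‖ ≤ ‖x‖ * ‖y‖ * ‖z‖ := by
  calc ‖x * y * z‖ ≤ ‖x * y‖ * ‖z‖ := norm_mul_le _ _
  _ ≤ ‖x‖ * ‖y‖ * ‖z‖ := by gcongr; exact norm_mul_le _ _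

/-- telescoping identity -/
lemma fp_sub_pow (c : ℕ → E →L[ℂ] E) (d : E →L[ℂ] E) (n : ℕ) :
    fp c n - d ^ n =
      ∑ j ∈ Finset.range n, fp c j * (c j - d) * d ^ (n - 1 - j) := by
  induction n with
  | zero => simp [fp]
  | succ n ih =>
    rw [Finset.sum_range_succ]
    have hterm : ∀ j ∈ Finset.range n,
        fp c j * (c j - d) * d ^ (n + 1 - 1 - j) =
          (fp c j * (c j - d) * d ^ (n - 1 - j)) * d := by
      intro j hj
      rw [Finset.mem_range] at hj
      have : n + 1 - 1 - j = (n - 1 - j) + 1 := by omega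
      rw [this, pow_succ, ← mul_assoc]
    rw [Finset.sum_congr rfl hterm, ← Finset.sum_mul, ← ih]
    have h1 : n + 1 - 1 - n = 0 := by omega
    rw [h1, pow_zero, mul_one]
    show fp c n * c n - d ^ (n+1) = _
    rw [pow_succ]
    noncomm_ring

lemma abel_identity (M N g : ℕ → E →L[ℂ] E) (m : ℕ) :
    ∑ j ∈ range (m + 1), M j * g j * N j =
      M m * (∑ k ∈ range (m + 1), g k) * N m
        + ∑ i ∈ range m, (M i * (∑ k ∈ range (i+1), g k) * N i
            - M (i+1) * (∑ k ∈ range (i+1), g k) * N (i+1)) := by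
  induction m with
  | zero => simp
  | succ m ih =>
    rw [Finset.sum_range_succ (f := fun j => M j * g j * N j), ih,
      Finset.sum_range_succ (f := fun i => (M i * (∑ k ∈ range (i+1), g k) * N i
            - M (i+1) * (∑ k ∈ range (i+1), g k) * N (i+1))),
      Finset.sum_range_succ (f := g) (n := m + 1)]
    noncomm_ring

lemma abel_bound (M N g : ℕ → E →L[ℂ] E) (n : ℕ) (hn : 1 ≤ n) (δ Δ : ℝ)
    (hδ : 0 ≤ δ) (hΔ : 0 ≤ Δ)
    (hM : ∀ j, ‖M j‖ ≤ 1) (hN : ∀ j, ‖N j‖ ≤ 1)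
    (hMd : ∀ i, i < n - 1 → ‖M i - M (i+1)‖ ≤ δ)
    (hNd : ∀ i, i < n - 1 → ‖N i - N (i+1)‖ ≤ δ)
    (hG : ∀ j, j < n → ‖∑ k ∈ range (j+1), g k‖ ≤ Δ) :
    ‖∑ j ∈ range n, M j * g j * N j‖ ≤ Δ * (1 + ((n : ℝ) - 1) * (2 * δ)) := by
  obtain ⟨m, rfl⟩ : ∃ m, n = m + 1 := ⟨n - 1, by omega⟩
  rw [abel_identity]
  have hmain : ‖M m * (∑ k ∈ range (m + 1), g k) * N m‖ ≤ Δ := by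
    calc ‖M m * (∑ k ∈ range (m + 1), g k) * N m‖
        ≤ ‖M m‖ * ‖∑ k ∈ range (m + 1), g k‖ * ‖N m‖ := norm_mul3_le _ _ _
    _ ≤ 1 * Δ * 1 := by
        gcongr
        · exact hM m
        · exact hG m (by omega)
        · exact hN m
    _ = Δ := by ring
  have hterm : ∀ i ∈ range m, ‖M i * (∑ k ∈ range (i+1), g k) * N i
      - M (i+1) * (∑ k ∈ range (i+1), g k) * N (i+1)‖ ≤ 2 * δ * Δ := by
    intro i hi
    rw [Finset.mem_range] at hi
    have hkey : M i * (∑ k ∈ range (i+1), g k) * N i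
        - M (i+1) * (∑ k ∈ range (i+1), g k) * N (i+1)
        = (M i - M (i+1)) * (∑ k ∈ range (i+1), g k) * N i
          + M (i+1) * (∑ k ∈ range (i+1), g k) * (N i - N (i+1)) := by noncomm_ring
    rw [hkey]
    have h1 : ‖(M i - M (i+1)) * (∑ k ∈ range (i+1), g k) * N i‖ ≤ δ * Δ * 1 := by
      refine le_trans (norm_mul3_le _ _ _) ?_
      gcongr
      · exact hMd i (by omega)
      · exact hG i (by omega)
      · exact hN i
    have h2 : ‖M (i+1) * (∑ k ∈ range (i+1), g k) * (N i - N (i+1))‖ ≤ 1 * Δ * δ := by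
      refine le_trans (norm_mul3_le _ _ _) ?_
      gcongr
      · exact hM (i+1)
      · exact hG i (by omega)
      · exact hNd i (by omega)
    calc _ ≤ _ := norm_add_le _ _
    _ ≤ δ * Δ * 1 + 1 * Δ * δ := add_le_add h1 h2
    _ = 2 * δ * Δ := by ring
  calc _ ≤ _ := norm_add_le _ _
  _ ≤ Δ + ∑ i ∈ range m, ‖M i * (∑ k ∈ range (i+1), g k) * N i
      - M (i+1) * (∑ k ∈ range (i+1), g k) * N (i+1)‖ := by
      exact add_le_add hmain (norm_sum_le _ _)
  _ ≤ Δ + ∑ _i ∈ range m, 2 * δ * Δ := by gcongr with i hi; exact hterm i hi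
  _ = Δ + m * (2 * δ * Δ) := by rw [Finset.sum_const, Finset.card_range]; ring
  _ ≤ Δ * (1 + ((m + 1 : ℕ) - 1 : ℝ) * (2 * δ)) := by push_cast; nlinarith

lemma exp_unitary {A : E →L[ℂ] E} (hA : IsSelfAdjoint A) (s : ℝ) :
    exp ((-(Complex.I * (s : ℂ))) • A) ∈ unitary (E →L[ℂ] E) := by
  let +nondep : NormedAlgebra ℚ (E →L[ℂ] E) := .restrictScalars ℚ ℂ (E →L[ℂ] E)
  refine exp_mem_unitary_of_mem_skewAdjoint ?_
  rw [skewAdjoint.mem_iff, star_smul, hA.star_eq]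
  simp [Complex.star_def, Complex.conj_ofReal]

lemma comp_ofReal' {f : ℂ → E →L[ℂ] E} {f' : E →L[ℂ] E} {u : ℝ}
    (h : HasDerivAt f f' (u : ℂ)) : HasDerivAt (fun y : ℝ => f y) f' u := by
  have := (h.hasFDerivAt.restrictScalars ℝ).comp u Complex.ofRealCLM.hasFDerivAt
  exact this.hasDerivAt.congr_deriv (by simp)

lemma smul_eq_aux (A : E →L[ℂ] E) (s : ℝ) :
    ((s : ℂ)) • ((-Complex.I) • A) = (-(Complex.I * (s : ℂ))) • A := by
  rw [smul_smul]; congr 1; ring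

lemma exp_deriv_aux (A : E →L[ℂ] E) (u : ℝ) :
    HasDerivAt (fun s : ℝ => exp ((-(Complex.I * (s : ℂ))) • A))
      (((-Complex.I) • A) * exp ((-(Complex.I * (u : ℂ))) • A)) u := by
  have h := hasDerivAt_exp_smul_const' (𝕂 := ℂ) ((-Complex.I) • A) (u : ℂ)
  have h2 := comp_ofReal' h
  simp only [smul_eq_aux] at h2
  exact h2

lemma norm_negI_smul (A : E →L[ℂ] E) : ‖(-Complex.I) • A‖ = ‖A‖ := by
  rw [norm_smul]; simp

lemma exp_sub_one_norm {A : E →L[ℂ] E} (hA : IsSelfAdjoint A) {s : ℝ} (hs : 0 ≤ s) :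
    ‖exp ((-(Complex.I * (s : ℂ))) • A) - 1‖ ≤ s * ‖A‖ := by
  have key := norm_image_sub_le_of_norm_deriv_le_segment'
    (f := fun u : ℝ => exp ((-(Complex.I * (u : ℂ))) • A))
    (f' := fun u : ℝ => ((-Complex.I) • A) * exp ((-(Complex.I * (u : ℂ))) • A))
    (a := 0) (b := s) (C := ‖A‖)
    (fun x _ => (exp_deriv_aux A x).hasDerivWithinAt)
    (fun x _ => by
      calc ‖((-Complex.I) • A) * exp ((-(Complex.I * (x : ℂ))) • A)‖
          ≤ ‖(-Complex.I) • A‖ * ‖exp ((-(Complex.I * (x : ℂ))) • A)‖ := norm_mul_le _ _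
      _ ≤ ‖A‖ * 1 := by
          rw [norm_negI_smul]
          gcongr
          exact unitary_norm_le' (exp_unitary hA x)
      _ = ‖A‖ := mul_one _)
    s (Set.right_mem_Icc.2 hs)
  have h0 : exp ((-(Complex.I * ((0:ℝ) : ℂ))) • A) = 1 := by
    simp [NormedSpace.exp_zero]
  have key2 : ‖exp ((-(Complex.I * (s : ℂ))) • A) - 1‖ ≤ ‖A‖ * (s - 0) := by
    simpa [h0] using key
  linarith [key2]

lemma exp_sub_one_sub_norm {A : E →L[ℂ] E} (hA : IsSelfAdjoint A) {s : ℝ} (hs : 0 ≤ s) :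
    ‖exp ((-(Complex.I * (s : ℂ))) • A) - 1 - (-(Complex.I * (s : ℂ))) • A‖
      ≤ (s * ‖A‖) ^ 2 := by
  have hderiv : ∀ u : ℝ, HasDerivAt
      (fun v : ℝ => exp ((-(Complex.I * (v : ℂ))) • A) - 1 - (-(Complex.I * (v : ℂ))) • A)
      (((-Complex.I) • A) * (exp ((-(Complex.I * (u : ℂ))) • A) - 1)) u := by
    intro u
    have h1 := exp_deriv_aux A u
    have h2 : HasDerivAt (fun v : ℝ => (-(Complex.I * (v : ℂ))) • A) ((-Complex.I) • A) u := by
      have hb := (hasDerivAt_id ((u : ℝ) : ℂ)).smul_const ((-Complex.I) • A)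
      rw [one_smul] at hb
      have h3 := comp_ofReal' hb
      simp only [id_eq, smul_eq_aux] at h3
      exact h3
    have := (h1.sub_const 1).sub h2
    exact this.congr_deriv (by noncomm_ring)
  have key := norm_image_sub_le_of_norm_deriv_le_segment'
    (f := fun v : ℝ => exp ((-(Complex.I * (v : ℂ))) • A) - 1 - (-(Complex.I * (v : ℂ))) • A)
    (f' := fun u : ℝ => ((-Complex.I) • A) * (exp ((-(Complex.I * (u : ℂ))) • A) - 1))
    (a := 0) (b := s) (C := ‖A‖ * (s * ‖A‖))
    (fun x _ => (hderiv x).hasDerivWithinAt)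
    (fun x hx => by
      calc ‖((-Complex.I) • A) * (exp ((-(Complex.I * (x : ℂ))) • A) - 1)‖
          ≤ ‖(-Complex.I) • A‖ * ‖exp ((-(Complex.I * (x : ℂ))) • A) - 1‖ := norm_mul_le _ _
      _ ≤ ‖A‖ * (s * ‖A‖) := by
          rw [norm_negI_smul]
          gcongr
          calc ‖exp ((-(Complex.I * (x : ℂ))) • A) - 1‖ ≤ x * ‖A‖ :=
                exp_sub_one_norm hA hx.1
          _ ≤ s * ‖A‖ := by gcongr; exact le_of_lt hx.2)
    s (Set.right_mem_Icc.2 hs)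
  have h0 : exp ((-(Complex.I * ((0:ℝ) : ℂ))) • A) - 1 - (-(Complex.I * ((0:ℝ) : ℂ))) • A
      = 0 := by simp [NormedSpace.exp_zero]
  have key2 : ‖exp ((-(Complex.I * (s : ℂ))) • A) - 1 - (-(Complex.I * (s : ℂ))) • A‖
      ≤ ‖A‖ * (s * ‖A‖) * (s - 0) := by simpa [h0] using key
  calc _ ≤ ‖A‖ * (s * ‖A‖) * (s - 0) := key2
  _ = (s * ‖A‖) ^ 2 := by ring

lemma unitaryProd_mem (U : ℕ → E →L[ℂ] E) (hU : ∀ n : ℕ, 1 ≤ n → U n ∈ unitary (E →L[ℂ] E))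
    (m : ℕ) : unitaryProd U m ∈ unitary (E →L[ℂ] E) := by
  induction m with
  | zero => exact one_mem _
  | succ m ih => exact mul_mem (hU (m+1) (by omega)) ih

lemma kicked_eq (U : ℕ → E →L[ℂ] E) (hU : ∀ n : ℕ, 1 ≤ n → U n ∈ unitary (E →L[ℂ] E))
    (K : E →L[ℂ] E) (n : ℕ) :
    kickedProd U K n = unitaryProd U (n + 1) *
      ap (fun j => star (unitaryProd U (j+1)) * K * unitaryProd U (j+1)) n := by
  induction n with
  | zero => simp [kickedProd, unitaryProd, ap]
  | succ m ih =>
    have hmul : unitaryProd U (m+1) * star (unitaryProd U (m+1)) = 1 :=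
      (unitaryProd_mem U hU (m+1)).2
    rw [kickedProd, ih]
    show _ = unitaryProd U (m+2) * ap _ (m+1)
    rw [show unitaryProd U (m+2) = U (m+2) * unitaryProd U (m+1) from rfl]
    rw [show ap (fun j => star (unitaryProd U (j+1)) * K * unitaryProd U (j+1)) (m+1)
        = (star (unitaryProd U (m+1)) * K * unitaryProd U (m+1)) *
          ap (fun j => star (unitaryProd U (j+1)) * K * unitaryProd U (j+1)) m from rfl]
    have hre : (U (m+2) * unitaryProd U (m+1)) *
        ((star (unitaryProd U (m+1)) * K * unitaryProd U (m+1)) *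
          ap (fun j => star (unitaryProd U (j+1)) * K * unitaryProd U (j+1)) m)
        = U (m+2) * ((unitaryProd U (m+1) * star (unitaryProd U (m+1))) *
            (K * (unitaryProd U (m+1) *
              ap (fun j => star (unitaryProd U (j+1)) * K * unitaryProd U (j+1)) m))) := by
      noncomm_ring
    rw [hre, hmul, one_mul]
    noncomm_ring

end FUKaux

/-- Frequent unitary kicks: if `V_n = U_n ⋯ U_1` and
`‖(1/n)Σ_{j=1}^n V_j* H V_j − H̄‖ ≤ (θ/n^α)‖H‖` for all `n ≥ 1`, then with
`W_n(t) = U_{n+1} exp(−i(t/n)H) U_n ⋯ U_2 exp(−i(t/n)H) U_1` one has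
`‖W_n(t) − V_{n+1} exp(−itH̄)‖ ≤ (θ/n^{α₁} + 2/n) t‖H‖ (1 + 2t‖H‖)`, `α₁ = min{α,1}`. -/
theorem frequent_unitary_kicks
    (H : E →L[ℂ] E) (hHsa : IsSelfAdjoint H)
    (U : ℕ → E →L[ℂ] E) (hU : ∀ n : ℕ, 1 ≤ n → U n ∈ unitary (E →L[ℂ] E))
    (Hbar : E →L[ℂ] E) (hHbarsa : IsSelfAdjoint Hbar)
    (θ α : ℝ) (hθ : 0 ≤ θ) (hα : 0 < α)
    (hmean : ∀ n : ℕ, 1 ≤ n →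
      ‖(n : ℝ)⁻¹ • (∑ j ∈ Finset.range n,
          star (unitaryProd U (j + 1)) * H * unitaryProd U (j + 1)) - Hbar‖
        ≤ (θ / (n : ℝ) ^ α) * ‖H‖) :
    ∀ n : ℕ, 1 ≤ n → ∀ t : ℝ, 0 ≤ t →
      ‖kickedProd U (NormedSpace.exp ((-(Complex.I * ((t / n : ℝ) : ℂ))) • H)) n
          - unitaryProd U (n + 1) * NormedSpace.exp ((-(Complex.I * (t : ℂ))) • Hbar)‖
        ≤ (θ / (n : ℝ) ^ (min α 1) + 2 / n) * (t * ‖H‖) * (1 + 2 * t * ‖H‖) := by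
  have hV := FUKaux.unitaryProd_mem U hU
  have hM0 : (0:ℝ) ≤ ‖H‖ := norm_nonneg H
  -- the averages have norm at most ‖H‖
  have havg : ∀ m : ℕ, 1 ≤ m → ‖(m : ℝ)⁻¹ • (∑ j ∈ Finset.range m,
      star (unitaryProd U (j + 1)) * H * unitaryProd U (j + 1))‖ ≤ ‖H‖ := by
    intro m hm
    have hmpos : (0:ℝ) < m := by exact_mod_cast hm
    rw [norm_smul]
    have hsum : ‖∑ j ∈ Finset.range m,
        star (unitaryProd U (j+1)) * H * unitaryProd U (j+1)‖ ≤ m * ‖H‖ := by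
      calc _ ≤ ∑ j ∈ Finset.range m,
          ‖star (unitaryProd U (j+1)) * H * unitaryProd U (j+1)‖ := norm_sum_le _ _
      _ ≤ ∑ _j ∈ Finset.range m, ‖H‖ := by
          gcongr with j hj; exact FUKaux.norm_conj_le (hV (j+1)) H
      _ = m * ‖H‖ := by rw [Finset.sum_const, Finset.card_range, nsmul_eq_mul]
    have hninv : ‖((m:ℝ)⁻¹ : ℝ)‖ = (m:ℝ)⁻¹ := by
      rw [Real.norm_eq_abs, abs_of_nonneg (by positivity)]
    rw [hninv]
    calc (m:ℝ)⁻¹ * ‖∑ j ∈ Finset.range m,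
        star (unitaryProd U (j+1)) * H * unitaryProd U (j+1)‖
        ≤ (m:ℝ)⁻¹ * ((m:ℝ) * ‖H‖) := by gcongr
    _ = ‖H‖ := by field_simp
  -- ‖Hbar‖ ≤ ‖H‖
  have hHbar_norm : ‖Hbar‖ ≤ ‖H‖ := by
    have h1 : Filter.Tendsto (fun m : ℕ => ((m:ℝ))^α) Filter.atTop Filter.atTop :=
      (tendsto_rpow_atTop hα).comp tendsto_natCast_atTop_atTop
    have h2 : Filter.Tendsto (fun m : ℕ => θ / ((m:ℝ))^α) Filter.atTop (nhds 0) :=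
      h1.const_div_atTop θ
    have h3 : Filter.Tendsto (fun m : ℕ => ‖H‖ + θ / ((m:ℝ))^α * ‖H‖)
        Filter.atTop (nhds ‖H‖) := by
      have := (h2.mul_const ‖H‖).const_add ‖H‖
      simpa using this
    refine ge_of_tendsto h3 ?_
    filter_upwards [Filter.eventually_ge_atTop 1] with m hm
    have h4 := hmean m hm
    have h5 : Hbar = ((m : ℝ)⁻¹ • (∑ j ∈ Finset.range m,
        star (unitaryProd U (j + 1)) * H * unitaryProd U (j + 1)))
        - (((m : ℝ)⁻¹ • (∑ j ∈ Finset.range m,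
        star (unitaryProd U (j + 1)) * H * unitaryProd U (j + 1))) - Hbar) := by abel
    calc ‖Hbar‖ = ‖_‖ := congrArg norm h5
    _ ≤ _ := norm_sub_le _ _
    _ ≤ ‖H‖ + θ / ((m:ℝ))^α * ‖H‖ := add_le_add (havg m hm) h4
  -- unscaled mean bound
  have hmean' : ∀ m : ℕ, 1 ≤ m →
      ‖∑ k ∈ Finset.range m,
        (star (unitaryProd U (k + 1)) * H * unitaryProd U (k + 1) - Hbar)‖
        ≤ θ * ((m:ℝ)) ^ ((1:ℝ) - α) * ‖H‖ := by
    intro m hm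
    have hmpos : (0:ℝ) < m := by exact_mod_cast hm
    have e1 : ∑ k ∈ Finset.range m,
        (star (unitaryProd U (k + 1)) * H * unitaryProd U (k + 1) - Hbar)
        = (m : ℝ) • ((m : ℝ)⁻¹ • (∑ j ∈ Finset.range m,
            star (unitaryProd U (j + 1)) * H * unitaryProd U (j + 1)) - Hbar) := by
      rw [smul_sub, smul_inv_smul₀ (ne_of_gt hmpos), Finset.sum_sub_distrib,
        Finset.sum_const, Finset.card_range, Nat.cast_smul_eq_nsmul]
    rw [e1, norm_smul, Real.norm_eq_abs, abs_of_nonneg (le_of_lt hmpos)]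
    have e2 : ((m:ℝ)) ^ ((1:ℝ) - α) = (m:ℝ) / (m:ℝ)^α := by
      rw [Real.rpow_sub hmpos, Real.rpow_one]
    calc (m:ℝ) * ‖(m : ℝ)⁻¹ • (∑ j ∈ Finset.range m,
            star (unitaryProd U (j + 1)) * H * unitaryProd U (j + 1)) - Hbar‖
        ≤ (m:ℝ) * ((θ / (m : ℝ) ^ α) * ‖H‖) := by gcongr; exact hmean m hm
    _ = θ * ((m:ℝ) / (m:ℝ)^α) * ‖H‖ := by ring
    _ = θ * ((m:ℝ)) ^ ((1:ℝ) - α) * ‖H‖ := by rw [e2]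
  intro n hn t ht
  have hN1 : (1:ℝ) ≤ (n:ℝ) := by exact_mod_cast hn
  have hN0 : (0:ℝ) < (n:ℝ) := by linarith
  set τ : ℝ := t / (n : ℝ) with hτdef
  have hτ0 : 0 ≤ τ := div_nonneg ht (le_of_lt hN0)
  set K : E →L[ℂ] E := NormedSpace.exp ((-(Complex.I * ((τ:ℝ) : ℂ))) • H) with hKdef
  set b : E →L[ℂ] E := NormedSpace.exp ((-(Complex.I * ((τ:ℝ) : ℂ))) • Hbar) with hbdef
  set a : ℕ → E →L[ℂ] E :=
    fun j => star (unitaryProd U (j+1)) * K * unitaryProd U (j+1) with hadef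
  set c : ℕ → E →L[ℂ] E := fun j => star (a j) with hcdef
  set d : E →L[ℂ] E := star b with hddef
  set hh : ℕ → E →L[ℂ] E :=
    fun j => star (unitaryProd U (j+1)) * H * unitaryProd U (j+1) with hhdef
  set g : ℕ → E →L[ℂ] E :=
    fun j => star ((-(Complex.I * ((τ:ℝ) : ℂ))) • (hh j - Hbar)) with hgdef
  -- unitarity facts
  have hKu : K ∈ unitary (E →L[ℂ] E) := FUKaux.exp_unitary hHsa τ
  have hbu : b ∈ unitary (E →L[ℂ] E) := FUKaux.exp_unitary hHbarsa τ
  have hau : ∀ j, a j ∈ unitary (E →L[ℂ] E) :=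
    fun j => mul_mem (mul_mem (Unitary.star_mem (hV (j+1))) hKu) (hV (j+1))
  have hc1 : ∀ j, ‖c j‖ ≤ 1 := by
    intro j
    simp only [hcdef]
    rw [norm_star]
    exact FUKaux.unitary_norm_le' (hau j)
  have hd1 : ‖d‖ ≤ 1 := by
    rw [hddef, norm_star]; exact FUKaux.unitary_norm_le' hbu
  -- first order bounds
  have hK1 : ‖K - 1‖ ≤ τ * ‖H‖ := by
    rw [hKdef]; exact FUKaux.exp_sub_one_norm hHsa hτ0
  have hb1 : ‖b - 1‖ ≤ τ * ‖H‖ := by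
    rw [hbdef]
    refine le_trans (FUKaux.exp_sub_one_norm hHbarsa hτ0) ?_
    exact mul_le_mul_of_nonneg_left hHbar_norm hτ0
  have haj1 : ∀ j, ‖a j - 1‖ ≤ τ * ‖H‖ := by
    intro j
    have e : a j - 1 = star (unitaryProd U (j+1)) * (K - 1) * unitaryProd U (j+1) := by
      simp only [hadef, mul_sub, sub_mul, mul_one, (hV (j+1)).1]
    rw [e]
    exact le_trans (FUKaux.norm_conj_le (hV (j+1)) _) hK1
  -- second order bound
  have hcd : ∀ j, ‖c j - d - g j‖ ≤ 2 * (τ * ‖H‖)^2 := by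
    intro j
    have e0 : c j - d - g j
        = star (a j - b - (-(Complex.I * ((τ:ℝ) : ℂ))) • (hh j - Hbar)) := by
      simp only [hcdef, hddef, hgdef, star_sub]
    rw [e0, norm_star]
    have e1 : a j - b - (-(Complex.I * ((τ:ℝ) : ℂ))) • (hh j - Hbar)
        = (a j - 1 - (-(Complex.I * ((τ:ℝ) : ℂ))) • hh j)
          - (b - 1 - (-(Complex.I * ((τ:ℝ) : ℂ))) • Hbar) := by
      rw [smul_sub]; abel
    rw [e1]
    have e2 : a j - 1 - (-(Complex.I * ((τ:ℝ) : ℂ))) • hh j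
        = star (unitaryProd U (j+1)) * (K - 1 - (-(Complex.I * ((τ:ℝ) : ℂ))) • H)
            * unitaryProd U (j+1) := by
      simp only [hadef, hhdef, mul_sub, sub_mul, mul_one, mul_smul_comm, smul_mul_assoc,
        (hV (j+1)).1]
    have hA1 : ‖a j - 1 - (-(Complex.I * ((τ:ℝ) : ℂ))) • hh j‖ ≤ (τ * ‖H‖)^2 := by
      rw [e2]
      refine le_trans (FUKaux.norm_conj_le (hV (j+1)) _) ?_
      rw [hKdef]
      exact FUKaux.exp_sub_one_sub_norm hHsa hτ0
    have hA2 : ‖b - 1 - (-(Complex.I * ((τ:ℝ) : ℂ))) • Hbar‖ ≤ (τ * ‖H‖)^2 := by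
      rw [hbdef]
      refine le_trans (FUKaux.exp_sub_one_sub_norm hHbarsa hτ0) ?_
      have : τ * ‖Hbar‖ ≤ τ * ‖H‖ := mul_le_mul_of_nonneg_left hHbar_norm hτ0
      nlinarith [mul_nonneg hτ0 (norm_nonneg Hbar)]
    calc _ ≤ _ := norm_sub_le _ _
    _ ≤ (τ * ‖H‖)^2 + (τ * ‖H‖)^2 := add_le_add hA1 hA2
    _ = 2 * (τ * ‖H‖)^2 := by ring
  -- Abel partial sum bound
  have hNα : (0:ℝ) < (n:ℝ) ^ (min α 1) := Real.rpow_pos_of_pos hN0 _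
  have hGb : ∀ j, j < n → ‖∑ k ∈ Finset.range (j+1), g k‖
      ≤ τ * (θ * (n:ℝ) ^ ((1:ℝ) - min α 1) * ‖H‖) := by
    intro j hj
    have hm1 : 1 ≤ j + 1 := by omega
    have e1 : ∑ k ∈ Finset.range (j+1), g k
        = star ((-(Complex.I * ((τ:ℝ) : ℂ))) •
            ∑ k ∈ Finset.range (j+1), (hh k - Hbar)) := by
      rw [Finset.smul_sum, star_sum]
    rw [e1, norm_star, norm_smul]
    have hns : ‖(-(Complex.I * ((τ:ℝ) : ℂ)))‖ = τ := by
      rw [norm_neg, norm_mul, Complex.norm_I, one_mul, Complex.norm_real,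
        Real.norm_eq_abs, abs_of_nonneg hτ0]
    rw [hns]
    have hmono : (((j+1:ℕ)):ℝ) ^ ((1:ℝ) - α) ≤ (n:ℝ) ^ ((1:ℝ) - min α 1) := by
      rcases le_or_gt α 1 with h | h
      · rw [min_eq_left h]
        exact Real.rpow_le_rpow (by positivity)
          (by exact_mod_cast Nat.succ_le_of_lt hj) (by linarith)
      · rw [min_eq_right (le_of_lt h), sub_self, Real.rpow_zero]
        exact Real.rpow_le_one_of_one_le_of_nonpos
          (by exact_mod_cast hm1) (by linarith)
    calc τ * ‖∑ k ∈ Finset.range (j+1), (hh k - Hbar)‖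
        ≤ τ * (θ * (((j+1:ℕ)):ℝ) ^ ((1:ℝ) - α) * ‖H‖) := by
          gcongr
          exact hmean' (j+1) hm1
    _ ≤ τ * (θ * (n:ℝ) ^ ((1:ℝ) - min α 1) * ‖H‖) := by gcongr
  -- structural identity
  have hkick := FUKaux.kicked_eq U hU K n
  rw [← hadef] at hkick
  have hBpow : NormedSpace.exp ((-(Complex.I * (t : ℂ))) • Hbar) = b ^ n := by
    let +nondep : NormedAlgebra ℚ (E →L[ℂ] E) := .restrictScalars ℚ ℂ (E →L[ℂ] E)
    rw [hbdef, ← NormedSpace.exp_nsmul]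
    congr 1
    rw [← Nat.cast_smul_eq_nsmul ℂ, smul_smul]
    congr 1
    have e : ((τ:ℝ) : ℂ) = (t:ℂ) / ((n:ℕ):ℂ) := by
      rw [hτdef]; push_cast; ring
    rw [e]
    have hnc : ((n:ℕ):ℂ) ≠ 0 := by
      exact_mod_cast Nat.cast_ne_zero.mpr (by omega : n ≠ 0)
    field_simp
  have hmain_eq : kickedProd U K n
      - unitaryProd U (n+1) * NormedSpace.exp ((-(Complex.I * (t : ℂ))) • Hbar)
      = unitaryProd U (n+1) * (FUKaux.ap a n - b ^ n) := by
    rw [hkick, hBpow, mul_sub]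
  rw [hmain_eq, FUKaux.norm_unitary_mul (hV (n+1))]
  have hstar : ‖FUKaux.ap a n - b ^ n‖ = ‖FUKaux.fp c n - d ^ n‖ := by
    rw [← norm_star, star_sub, FUKaux.star_ap, star_pow, ← hcdef, ← hddef]
  rw [hstar, FUKaux.fp_sub_pow]
  have hsplit : ∀ j ∈ Finset.range n, FUKaux.fp c j * (c j - d) * d ^ (n - 1 - j)
      = FUKaux.fp c j * (c j - d - g j) * d ^ (n - 1 - j)
        + FUKaux.fp c j * g j * d ^ (n - 1 - j) := by
    intro j _; noncomm_ring
  rw [Finset.sum_congr rfl hsplit, Finset.sum_add_distrib]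
  have hfp1 : ∀ j, ‖FUKaux.fp c j‖ ≤ 1 := FUKaux.fp_norm_le hc1
  have hpow1 : ∀ k, ‖d ^ k‖ ≤ 1 := FUKaux.pow_norm_le hd1
  have hsum1 : ‖∑ j ∈ Finset.range n, FUKaux.fp c j * (c j - d - g j) * d ^ (n-1-j)‖
      ≤ (n:ℝ) * (2 * (τ * ‖H‖)^2) := by
    calc _ ≤ ∑ j ∈ Finset.range n,
        ‖FUKaux.fp c j * (c j - d - g j) * d ^ (n-1-j)‖ := norm_sum_le _ _
    _ ≤ ∑ _j ∈ Finset.range n, 2 * (τ * ‖H‖)^2 := by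
        gcongr with j hj
        calc _ ≤ ‖FUKaux.fp c j‖ * ‖c j - d - g j‖ * ‖d ^ (n-1-j)‖ :=
              FUKaux.norm_mul3_le _ _ _
        _ ≤ 1 * (2 * (τ * ‖H‖)^2) * 1 := by
            gcongr
            · exact hfp1 j
            · exact hcd j
            · exact hpow1 _
        _ = 2 * (τ * ‖H‖)^2 := by ring
    _ = (n:ℝ) * (2 * (τ * ‖H‖)^2) := by
        rw [Finset.sum_const, Finset.card_range, nsmul_eq_mul]
  have hsum2 : ‖∑ j ∈ Finset.range n, FUKaux.fp c j * g j * d ^ (n-1-j)‖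
      ≤ (τ * (θ * (n:ℝ) ^ ((1:ℝ) - min α 1) * ‖H‖))
          * (1 + ((n:ℝ) - 1) * (2 * (τ * ‖H‖))) := by
    refine FUKaux.abel_bound (fun j => FUKaux.fp c j) (fun j => d ^ (n-1-j)) g n hn
      (τ * ‖H‖) (τ * (θ * (n:ℝ) ^ ((1:ℝ) - min α 1) * ‖H‖))
      (by positivity) (by positivity) hfp1 (fun j => hpow1 _) ?_ ?_ hGb
    · intro i hi
      have e : FUKaux.fp c i - FUKaux.fp c (i+1) = FUKaux.fp c i * (1 - c i) := by
        rw [show FUKaux.fp c (i+1) = FUKaux.fp c i * c i from rfl]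
        noncomm_ring
      rw [e]
      have h1c : ‖(1 : E →L[ℂ] E) - c i‖ ≤ τ * ‖H‖ := by
        have e2 : (1 : E →L[ℂ] E) - c i = star (1 - a i) := by
          rw [star_sub, star_one]
        rw [e2, norm_star, norm_sub_rev]
        exact haj1 i
      calc ‖FUKaux.fp c i * (1 - c i)‖ ≤ ‖FUKaux.fp c i‖ * ‖1 - c i‖ := norm_mul_le _ _
      _ ≤ 1 * (τ * ‖H‖) := mul_le_mul (hfp1 i) h1c (norm_nonneg _) zero_le_one
      _ = τ * ‖H‖ := one_mul _
    · intro i hi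
      have hk : n - 1 - i = (n - 1 - (i+1)) + 1 := by omega
      have e : d ^ (n-1-i) - d ^ (n-1-(i+1)) = d ^ (n-1-(i+1)) * (d - 1) := by
        rw [hk, pow_succ]
        noncomm_ring
      rw [e]
      have hd1' : ‖d - 1‖ ≤ τ * ‖H‖ := by
        have e2 : d - 1 = star (b - 1) := by rw [star_sub, star_one, ← hddef]
        rw [e2, norm_star]
        exact hb1
      calc ‖d ^ (n-1-(i+1)) * (d - 1)‖ ≤ ‖d ^ (n-1-(i+1))‖ * ‖d - 1‖ := norm_mul_le _ _
      _ ≤ 1 * (τ * ‖H‖) := mul_le_mul (hpow1 _) hd1' (norm_nonneg _) zero_le_one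
      _ = τ * ‖H‖ := one_mul _
  -- final arithmetic
  have harith : (n:ℝ) * (2 * (τ * ‖H‖)^2)
      + (τ * (θ * (n:ℝ) ^ ((1:ℝ) - min α 1) * ‖H‖))
          * (1 + ((n:ℝ) - 1) * (2 * (τ * ‖H‖)))
      ≤ (θ / (n:ℝ) ^ (min α 1) + 2 / (n:ℝ)) * (t * ‖H‖) * (1 + 2 * t * ‖H‖) := by
    have hNsub : (n:ℝ) ^ ((1:ℝ) - min α 1) = (n:ℝ) / (n:ℝ) ^ (min α 1) := by
      rw [Real.rpow_sub hN0, Real.rpow_one]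
    rw [hNsub, hτdef]
    have h1 : (n:ℝ) * (2 * ((t/(n:ℝ)) * ‖H‖)^2)
        ≤ 2/(n:ℝ) * (t * ‖H‖) * (1 + 2 * t * ‖H‖) := by
      have e : 2/(n:ℝ) * (t * ‖H‖) * (1 + 2 * t * ‖H‖)
          - (n:ℝ) * (2 * ((t/(n:ℝ)) * ‖H‖)^2)
          = (2 * t * ‖H‖ / (n:ℝ)) * (1 + t * ‖H‖) := by
        field_simp
        ring
      have hpos : (0:ℝ) ≤ (2 * t * ‖H‖ / (n:ℝ)) * (1 + t * ‖H‖) := by positivity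
      linarith [e, hpos]
    have h2 : ((t/(n:ℝ)) * (θ * ((n:ℝ) / (n:ℝ) ^ (min α 1)) * ‖H‖))
        * (1 + ((n:ℝ) - 1) * (2 * ((t/(n:ℝ)) * ‖H‖)))
        ≤ θ / (n:ℝ) ^ (min α 1) * (t * ‖H‖) * (1 + 2 * t * ‖H‖) := by
      have e2 : ((t/(n:ℝ)) * (θ * ((n:ℝ) / (n:ℝ) ^ (min α 1)) * ‖H‖))
          = θ / (n:ℝ) ^ (min α 1) * (t * ‖H‖) := by
        field_simp
      rw [e2]
      have hfr : ((n:ℝ) - 1) * (2 * ((t/(n:ℝ)) * ‖H‖)) ≤ 2 * t * ‖H‖ := by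
        have e3 : ((n:ℝ) - 1) * (2 * ((t/(n:ℝ)) * ‖H‖))
            = 2 * ‖H‖ * (t * ((n:ℝ) - 1) / (n:ℝ)) := by ring
        rw [e3]
        have h5 : t * ((n:ℝ) - 1) / (n:ℝ) ≤ t := by
          rw [div_le_iff₀ hN0]; nlinarith
        nlinarith [hM0, h5]
      have hnn : (0:ℝ) ≤ θ / (n:ℝ) ^ (min α 1) * (t * ‖H‖) := by positivity
      nlinarith [hfr, hnn]
    have e4 : (θ / (n:ℝ) ^ (min α 1) + 2 / (n:ℝ)) * (t * ‖H‖) * (1 + 2 * t * ‖H‖)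
        = θ / (n:ℝ) ^ (min α 1) * (t * ‖H‖) * (1 + 2 * t * ‖H‖)
          + 2/(n:ℝ) * (t * ‖H‖) * (1 + 2 * t * ‖H‖) := by ring
    rw [e4]
    linarith [h1, h2]
  calc ‖∑ j ∈ Finset.range n, FUKaux.fp c j * (c j - d - g j) * d ^ (n-1-j)
      + ∑ j ∈ Finset.range n, FUKaux.fp c j * g j * d ^ (n-1-j)‖
      ≤ ‖∑ j ∈ Finset.range n, FUKaux.fp c j * (c j - d - g j) * d ^ (n-1-j)‖
        + ‖∑ j ∈ Finset.range n, FUKaux.fp c j * g j * d ^ (n-1-j)‖ := norm_add_le _ _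
  _ ≤ (n:ℝ) * (2 * (τ * ‖H‖)^2)
      + (τ * (θ * (n:ℝ) ^ ((1:ℝ) - min α 1) * ‖H‖))
          * (1 + ((n:ℝ) - 1) * (2 * (τ * ‖H‖))) := add_le_add hsum1 hsum2
  _ ≤ _ := harith
end

section
/- Bang-bang control (fixed kick): Let H be a bounded self-adjoint operator on ℋ and let U be a unitary with the finite spectral representation U = Σ_{ℓ=1}^m e^{−iφ_ℓ} P_ℓ, where the e^{−iφ_ℓ} are m distinct eigenvalues and P₁,…,P_m are self-adjoint projections with P_k P_ℓ = δ_{kℓ} P_ℓ and Σ_ℓ P_ℓ = 1. Let η = min_{k≠ℓ} |e^{−iφ_k} − e^{−iφ_ℓ}| and H_Z = Σ_{ℓ=1}^m P_ℓ H P_ℓ. Then for all integers n ≥ 1 and all t ≥ 0: ‖ (U·exp(−i(t/n)H))^n − Uⁿ·exp(−i t H_Z) ‖ ≤ (2/n)·(√m/η + 1)·t‖H‖·(1 + 2t‖H‖). -/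
open MeasureTheory

variable {E : Type*} [NormedAddCommGroup E] [InnerProductSpace ℂ E] [CompleteSpace E]
  [TopologicalSpace.SeparableSpace E]

section Helpers
open Finset

private lemma tele_pow_sub_pow {A : Type*} [Ring A] (a b : A) :
    ∀ n : ℕ, a ^ n - b ^ n = ∑ j ∈ Finset.range n, a ^ (n - 1 - j) * (a - b) * b ^ j := by
  intro n
  induction n with
  | zero => simp
  | succ n ih =>
    have h1 : a ^ (n + 1) - b ^ (n + 1) = a * (a ^ n - b ^ n) + (a - b) * b ^ n := by
      rw [pow_succ', pow_succ']; noncomm_ring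
    rw [h1, ih, Finset.mul_sum, Finset.sum_range_succ]
    congr 1
    · refine Finset.sum_congr rfl fun j hj => ?_
      have hj' : j < n := Finset.mem_range.mp hj
      have he : n + 1 - 1 - j = (n - 1 - j) + 1 := by omega
      rw [he, pow_succ']
      noncomm_ring
    · have h0 : n + 1 - 1 - n = 0 := by omega
      rw [h0, pow_zero, one_mul]

private lemma norm_pow_le_one' {A : Type*} [NormedRing A] {a : A} (h1 : ‖(1 : A)‖ ≤ 1)
    (ha : ‖a‖ ≤ 1) : ∀ k : ℕ, ‖a ^ k‖ ≤ 1 := by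
  intro k
  induction k with
  | zero => simpa using h1
  | succ k ih =>
    calc ‖a ^ (k+1)‖ = ‖a ^ k * a‖ := by rw [pow_succ]
    _ ≤ ‖a ^ k‖ * ‖a‖ := norm_mul_le _ _
    _ ≤ 1 * 1 := mul_le_mul ih ha (norm_nonneg _) zero_le_one
    _ = 1 := one_mul 1

end Helpers

section ExpBounds
open Finset

private lemma exp_factorial_tsum (x : ℝ) :
    ∑' n : ℕ, x ^ n / (Nat.factorial n) = Real.exp x := by
  rw [Real.exp_eq_exp_ℝ, NormedSpace.exp_eq_tsum_div]

private lemma summable_pow_div_fact (x : ℝ) :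
    Summable (fun n : ℕ => x ^ n / (Nat.factorial n)) :=
  Real.summable_pow_div_factorial x

set_option maxHeartbeats 1000000 in
private lemma norm_exp_sub_one_le'' {A : Type*} [NormedRing A] [NormedAlgebra ℂ A]
    [CompleteSpace A] (X : A) :
    ‖NormedSpace.exp X - 1‖ ≤ ‖X‖ * Real.exp ‖X‖ := by
  have hsum : Summable (fun k : ℕ => ((Nat.factorial k : ℂ))⁻¹ • X ^ k) :=
    NormedSpace.expSeries_summable' X
  have hnorm : Summable (fun k : ℕ => ‖((Nat.factorial k : ℂ))⁻¹ • X ^ k‖) :=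
    NormedSpace.norm_expSeries_summable' X
  have h0 : NormedSpace.exp X = ∑' k : ℕ, ((Nat.factorial k : ℂ))⁻¹ • X ^ k := by
    rw [NormedSpace.exp_eq_tsum ℂ]
  rw [h0, Summable.tsum_eq_zero_add hsum]
  simp only [Nat.factorial_zero, Nat.cast_one, inv_one, pow_zero, one_smul]
  rw [add_sub_cancel_left]
  have hnorm1 : Summable (fun k : ℕ => ‖((Nat.factorial (k+1) : ℂ))⁻¹ • X ^ (k+1)‖) :=
    (summable_nat_add_iff 1).mpr hnorm
  calc ‖∑' k : ℕ, ((Nat.factorial (k+1) : ℂ))⁻¹ • X ^ (k+1)‖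
      ≤ ∑' k : ℕ, ‖((Nat.factorial (k+1) : ℂ))⁻¹ • X ^ (k+1)‖ := norm_tsum_le_tsum_norm hnorm1
    _ ≤ ∑' k : ℕ, ‖X‖ * (‖X‖ ^ k / (Nat.factorial k)) := by
        refine Summable.tsum_le_tsum (fun k => ?_) hnorm1 ((summable_pow_div_fact ‖X‖).mul_left _)
        rw [norm_smul]
        have h2 : ‖((Nat.factorial (k+1) : ℂ))⁻¹‖ = ((Nat.factorial (k+1) : ℝ))⁻¹ := by
          rw [norm_inv]; norm_num
        rw [h2]
        have h3 : ‖X ^ (k+1)‖ ≤ ‖X‖ ^ (k+1) := norm_pow_le' X (Nat.succ_pos k)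
        have h4 : ((Nat.factorial (k+1) : ℝ))⁻¹ ≤ ((Nat.factorial k : ℝ))⁻¹ := by
          apply inv_anti₀
          · positivity
          · exact_mod_cast Nat.factorial_le (Nat.le_succ k)
        have h5 : (0:ℝ) < (Nat.factorial k : ℝ) := by positivity
        calc ((Nat.factorial (k+1) : ℝ))⁻¹ * ‖X ^ (k+1)‖
            ≤ ((Nat.factorial k : ℝ))⁻¹ * ‖X‖ ^ (k+1) := by
              apply mul_le_mul h4 (h3.trans_eq rfl) (norm_nonneg _) (by positivity)
          _ = ‖X‖ * (‖X‖ ^ k / (Nat.factorial k)) := by rw [pow_succ]; field_simp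
    _ = ‖X‖ * Real.exp ‖X‖ := by
        rw [tsum_mul_left, exp_factorial_tsum]

set_option maxHeartbeats 1000000 in
private lemma norm_exp_sub_one_sub_le {A : Type*} [NormedRing A] [NormedAlgebra ℂ A]
    [CompleteSpace A] (X : A) :
    ‖NormedSpace.exp X - 1 - X‖ ≤ ‖X‖ ^ 2 / 2 * Real.exp ‖X‖ := by
  have hsum : Summable (fun k : ℕ => ((Nat.factorial k : ℂ))⁻¹ • X ^ k) :=
    NormedSpace.expSeries_summable' X
  have hnorm : Summable (fun k : ℕ => ‖((Nat.factorial k : ℂ))⁻¹ • X ^ k‖) :=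
    NormedSpace.norm_expSeries_summable' X
  have h0 : NormedSpace.exp X = ∑' k : ℕ, ((Nat.factorial k : ℂ))⁻¹ • X ^ k := by
    rw [NormedSpace.exp_eq_tsum ℂ]
  have hsum1 : Summable (fun k : ℕ => ((Nat.factorial (k+1) : ℂ))⁻¹ • X ^ (k+1)) :=
    (summable_nat_add_iff 1).mpr hsum
  have hnorm2 : Summable (fun k : ℕ => ‖((Nat.factorial (k+2) : ℂ))⁻¹ • X ^ (k+2)‖) :=
    (summable_nat_add_iff 2).mpr hnorm
  rw [h0, Summable.tsum_eq_zero_add hsum]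
  simp only [Nat.factorial_zero, Nat.cast_one, inv_one, pow_zero, one_smul]
  rw [Summable.tsum_eq_zero_add hsum1]
  norm_num
  have hgoal : ‖∑' (b : ℕ), ((Nat.factorial (b+1+1):ℂ))⁻¹ • X ^ (b+1+1)‖
      = ‖∑' (b : ℕ), ((Nat.factorial (b+2):ℂ))⁻¹ • X ^ (b+2)‖ := rfl
  rw [hgoal]
  calc ‖∑' k : ℕ, ((Nat.factorial (k+2) : ℂ))⁻¹ • X ^ (k+2)‖
      ≤ ∑' k : ℕ, ‖((Nat.factorial (k+2) : ℂ))⁻¹ • X ^ (k+2)‖ := norm_tsum_le_tsum_norm hnorm2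
    _ ≤ ∑' k : ℕ, (‖X‖ ^ 2 / 2) * (‖X‖ ^ k / (Nat.factorial k)) := by
        refine Summable.tsum_le_tsum (fun k => ?_) hnorm2 ((summable_pow_div_fact ‖X‖).mul_left _)
        rw [norm_smul]
        have h2 : ‖((Nat.factorial (k+2) : ℂ))⁻¹‖ = ((Nat.factorial (k+2) : ℝ))⁻¹ := by
          rw [norm_inv]; norm_num
        rw [h2]
        have h3 : ‖X ^ (k+2)‖ ≤ ‖X‖ ^ (k+2) := norm_pow_le' X (by omega)
        have h4 : ((Nat.factorial (k+2) : ℝ))⁻¹ ≤ (2 * (Nat.factorial k : ℝ))⁻¹ := by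
          apply inv_anti₀
          · positivity
          · have h6 : 2 * Nat.factorial k ≤ Nat.factorial (k+2) := by
              rw [Nat.factorial_succ, Nat.factorial_succ]
              calc 2 * Nat.factorial k = 2 * (1 * Nat.factorial k) := by ring
                _ ≤ (k+1+1) * ((k+1) * Nat.factorial k) :=
                    Nat.mul_le_mul (by omega) (Nat.mul_le_mul (by omega) le_rfl)
            exact_mod_cast h6
        have h5 : (0:ℝ) < (Nat.factorial k : ℝ) := by positivity
        calc ((Nat.factorial (k+2) : ℝ))⁻¹ * ‖X ^ (k+2)‖
            ≤ (2 * (Nat.factorial k : ℝ))⁻¹ * ‖X‖ ^ (k+2) := by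
              apply mul_le_mul h4 h3 (norm_nonneg _) (by positivity)
          _ = (‖X‖ ^ 2 / 2) * (‖X‖ ^ k / (Nat.factorial k)) := by
              rw [pow_add]; field_simp
    _ = ‖X‖ ^ 2 / 2 * Real.exp ‖X‖ := by
        rw [tsum_mul_left, exp_factorial_tsum]

end ExpBounds

section Tele
open Finset

set_option maxHeartbeats 1000000 in
private lemma tele_bound {A : Type*} [NormedRing A] (u u' v w s : A) (n : ℕ) (hn : 1 ≤ n)
    (h1 : ‖(1 : A)‖ ≤ 1) (huu' : u * u' = 1) (huw : u * w = w * u)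
    (hu : ‖u‖ ≤ 1) (ha : ‖u * v‖ ≤ 1) (hb : ‖u * w‖ ≤ 1) :
    ‖∑ j ∈ Finset.range n, (u*v)^(n-1-j) * (u * (s - u' * s * u)) * (u*w)^j‖
      ≤ 2 * ‖s‖ + (n - 1 : ℕ) * ((‖v - 1‖ + ‖w - 1‖) * ‖s‖) := by
  obtain ⟨n', rfl⟩ : ∃ n'', n = n'' + 1 := ⟨n - 1, by omega⟩
  set P : ℕ → A := fun j => (u*v) ^ (n' + 1 - 1 - j) * (u * s) * (u*w) ^ j with hPdef
  set Q : ℕ → A := fun j => (u*v) ^ (n' + 1 - 1 - j) * (s * u) * (u*w) ^ j with hQdef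
  have hterm : ∀ j, (u*v) ^ (n' + 1 - 1 - j) * (u * (s - u' * s * u)) * (u*w) ^ j
      = P j - Q j := by
    intro j
    have hmid : u * (s - u' * s * u) = u * s - s * u := by
      rw [mul_sub]
      congr 1
      calc u * (u' * s * u) = (u * u') * s * u := by noncomm_ring
        _ = s * u := by rw [huu']; noncomm_ring
    rw [hmid, hPdef, hQdef]
    noncomm_ring
  have key : ∀ Ap B : A, (Ap * (u*v)) * (s*u) * B - Ap * (u*s) * ((u*w) * B)
      = Ap * u * (v*s - s*w) * (u*B) := by
    intro Ap B
    have h2 : Ap * (u*s) * ((u*w) * B) = Ap * (u * (s*w)) * (u*B) := by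
      calc Ap * (u*s) * ((u*w) * B) = Ap * (u * (s * ((u*w) * B))) := by noncomm_ring
        _ = Ap * (u * (s * ((w*u) * B))) := by rw [huw]
        _ = Ap * (u * (s*w)) * (u*B) := by noncomm_ring
    rw [h2]
    noncomm_ring
  have hstep : ∀ j, j < n' →
      Q j - P (j + 1) = (u*v) ^ (n' - 1 - j) * u * (v * s - s * w) * (u * (u*w) ^ j) := by
    intro j hj
    have e1 : n' + 1 - 1 - j = (n' - 1 - j) + 1 := by omega
    have e2 : n' + 1 - 1 - (j + 1) = n' - 1 - j := by omega
    rw [hPdef, hQdef]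
    simp only [e1, e2, pow_succ (u*v), pow_succ' (u*w)]
    exact key _ _
  have hsplit : ∑ j ∈ Finset.range (n' + 1), (P j - Q j)
      = P 0 - Q n' + ∑ j ∈ Finset.range n', (P (j + 1) - Q j) := by
    rw [Finset.sum_sub_distrib, Finset.sum_range_succ' P, Finset.sum_range_succ Q,
      Finset.sum_sub_distrib]
    abel
  have hnorm_pq : ∀ j, j < n' → ‖P (j + 1) - Q j‖ ≤ (‖v - 1‖ + ‖w - 1‖) * ‖s‖ := by
    intro j hj
    have hflip : P (j + 1) - Q j
        = -((u*v) ^ (n' - 1 - j) * u * (v * s - s * w) * (u * (u*w) ^ j)) := by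
      rw [← hstep j hj]; abel
    rw [hflip, norm_neg]
    have hvs : ‖v * s - s * w‖ ≤ (‖v - 1‖ + ‖w - 1‖) * ‖s‖ := by
      have hid : v * s - s * w = (v - 1) * s - s * (w - 1) := by noncomm_ring
      rw [hid]
      calc ‖(v - 1) * s - s * (w - 1)‖ ≤ ‖(v - 1) * s‖ + ‖s * (w - 1)‖ := norm_sub_le _ _
        _ ≤ ‖v - 1‖ * ‖s‖ + ‖s‖ * ‖w - 1‖ :=
            add_le_add (norm_mul_le _ _) (norm_mul_le _ _)
        _ = (‖v - 1‖ + ‖w - 1‖) * ‖s‖ := by ring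
    have h2 : ‖(u*v) ^ (n' - 1 - j) * u‖ ≤ 1 := by
      calc ‖(u*v) ^ (n' - 1 - j) * u‖ ≤ ‖(u*v) ^ (n' - 1 - j)‖ * ‖u‖ := norm_mul_le _ _
        _ ≤ 1 * 1 := mul_le_mul (norm_pow_le_one' h1 ha _) hu (norm_nonneg _) zero_le_one
        _ = 1 := one_mul 1
    have h3 : ‖u * (u*w) ^ j‖ ≤ 1 := by
      calc ‖u * (u*w) ^ j‖ ≤ ‖u‖ * ‖(u*w) ^ j‖ := norm_mul_le _ _
        _ ≤ 1 * 1 := mul_le_mul hu (norm_pow_le_one' h1 hb _) (norm_nonneg _) zero_le_one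
        _ = 1 := one_mul 1
    calc ‖(u*v) ^ (n' - 1 - j) * u * (v * s - s * w) * (u * (u*w) ^ j)‖
        ≤ ‖(u*v) ^ (n' - 1 - j) * u * (v * s - s * w)‖ * ‖u * (u*w) ^ j‖ := norm_mul_le _ _
      _ ≤ ‖(u*v) ^ (n' - 1 - j) * u‖ * ‖v * s - s * w‖ * ‖u * (u*w) ^ j‖ :=
          mul_le_mul_of_nonneg_right (norm_mul_le _ _) (norm_nonneg _)
      _ ≤ 1 * ‖v * s - s * w‖ * 1 := by
          apply mul_le_mul (mul_le_mul h2 le_rfl (norm_nonneg _) zero_le_one) h3 (norm_nonneg _)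
          positivity
      _ = ‖v * s - s * w‖ := by ring
      _ ≤ (‖v - 1‖ + ‖w - 1‖) * ‖s‖ := hvs
  have hP0 : ‖P 0‖ ≤ ‖s‖ := by
    rw [hPdef]
    simp only [pow_zero, mul_one]
    calc ‖(u*v) ^ (n' + 1 - 1 - 0) * (u * s)‖
        ≤ ‖(u*v) ^ (n' + 1 - 1 - 0)‖ * ‖u * s‖ := norm_mul_le _ _
      _ ≤ 1 * (‖u‖ * ‖s‖) := mul_le_mul (norm_pow_le_one' h1 ha _) (norm_mul_le _ _)
          (norm_nonneg _) zero_le_one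
      _ ≤ 1 * (1 * ‖s‖) := by
          apply mul_le_mul_of_nonneg_left _ zero_le_one
          exact mul_le_mul_of_nonneg_right hu (norm_nonneg _)
      _ = ‖s‖ := by ring
  have hQn : ‖Q n'‖ ≤ ‖s‖ := by
    rw [hQdef]
    have e3 : n' + 1 - 1 - n' = 0 := by omega
    simp only [e3, pow_zero, one_mul]
    calc ‖s * u * (u*w) ^ n'‖ ≤ ‖s * u‖ * ‖(u*w) ^ n'‖ := norm_mul_le _ _
      _ ≤ ‖s‖ * ‖u‖ * ‖(u*w) ^ n'‖ := mul_le_mul_of_nonneg_right (norm_mul_le _ _)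
          (norm_nonneg _)
      _ ≤ ‖s‖ * 1 * 1 := by
          apply mul_le_mul (mul_le_mul_of_nonneg_left hu (norm_nonneg _))
            (norm_pow_le_one' h1 hb _) (norm_nonneg _) (by positivity)
      _ = ‖s‖ := by ring
  calc ‖∑ j ∈ Finset.range (n' + 1), (u*v) ^ (n' + 1 - 1 - j) * (u * (s - u' * s * u)) * (u*w) ^ j‖
      = ‖∑ j ∈ Finset.range (n' + 1), (P j - Q j)‖ := by
        congr 1; exact Finset.sum_congr rfl fun j _ => hterm j
    _ = ‖P 0 - Q n' + ∑ j ∈ Finset.range n', (P (j + 1) - Q j)‖ := by rw [hsplit]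
    _ ≤ ‖P 0 - Q n'‖ + ‖∑ j ∈ Finset.range n', (P (j + 1) - Q j)‖ := norm_add_le _ _
    _ ≤ (‖P 0‖ + ‖Q n'‖) + ∑ j ∈ Finset.range n', ‖P (j + 1) - Q j‖ :=
        add_le_add (norm_sub_le _ _) (norm_sum_le _ _)
    _ ≤ (‖s‖ + ‖s‖) + ∑ j ∈ Finset.range n', ((‖v - 1‖ + ‖w - 1‖) * ‖s‖) := by
        apply add_le_add (add_le_add hP0 hQn)
        exact Finset.sum_le_sum fun j hj => hnorm_pq j (Finset.mem_range.mp hj)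
    _ = 2 * ‖s‖ + (n' : ℝ) * ((‖v - 1‖ + ‖w - 1‖) * ‖s‖) := by
        rw [Finset.sum_const, Finset.card_range]
        push_cast
        ring
    _ = 2 * ‖s‖ + ((n' + 1 - 1 : ℕ) : ℝ) * ((‖v - 1‖ + ‖w - 1‖) * ‖s‖) := by norm_num

end Tele

section Pyth
open Finset ComplexInnerProductSpace

private lemma pyth_sum {E : Type*} [NormedAddCommGroup E] [InnerProductSpace ℂ E]
    [CompleteSpace E] {m : ℕ} (P : Fin m → E →L[ℂ] E)
    (hPsa : ∀ l, IsSelfAdjoint (P l))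
    (hPorth : ∀ k l : Fin m, P k * P l = if k = l then P l else 0)
    (w : Fin m → E) :
    ‖∑ l, P l (w l)‖ ^ 2 = ∑ l, ‖P l (w l)‖ ^ 2 := by
  have hinner : ∀ (k l : Fin m) (a b : E), k ≠ l → ⟪P k a, P l b⟫ = 0 := by
    intro k l a b hkl
    have hse : ⟪P k a, P l b⟫ = ⟪a, P k (P l b)⟫ := by
      conv_lhs => rw [← (hPsa k).adjoint_eq]
      exact ContinuousLinearMap.adjoint_inner_left _ _ _
    have hz : P k (P l b) = 0 := by
      have h0 := hPorth k l
      rw [if_neg hkl] at h0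
      have h1 := congrFun (congrArg DFunLike.coe h0) b
      simpa using h1
    rw [hse, hz, inner_zero_right]
  have expand : ⟪∑ l, P l (w l), ∑ l, P l (w l)⟫ = ∑ l, ⟪P l (w l), P l (w l)⟫ := by
    rw [sum_inner]
    refine Finset.sum_congr rfl fun k _ => ?_
    rw [inner_sum]
    exact Finset.sum_eq_single k (fun b _ hb => hinner k b _ _ (Ne.symm hb))
      (fun h => absurd (Finset.mem_univ k) h)
  calc ‖∑ l, P l (w l)‖ ^ 2 = RCLike.re ⟪∑ l, P l (w l), ∑ l, P l (w l)⟫ :=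
        (inner_self_eq_norm_sq _).symm
    _ = RCLike.re (∑ l, ⟪P l (w l), P l (w l)⟫) := by rw [expand]
    _ = ∑ l, RCLike.re ⟪P l (w l), P l (w l)⟫ := by rw [map_sum]
    _ = ∑ l, ‖P l (w l)‖ ^ 2 := Finset.sum_congr rfl fun l _ => inner_self_eq_norm_sq _

end Pyth

set_option maxHeartbeats 4000000 in
/-- Bang-bang control (fixed kick): for a unitary `U = Σ_ℓ e^{−iφ_ℓ} P_ℓ` with `m` distinct
eigenvalues, minimal spectral gap `η`, and Zeno Hamiltonian `H_Z = Σ_ℓ P_ℓ H P_ℓ`: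
`‖(U exp(−i(t/n)H))^n − Uⁿ exp(−itH_Z)‖ ≤ (2/n)(√m/η + 1) t‖H‖ (1 + 2t‖H‖)`. -/
theorem bang_bang_control
    (H : E →L[ℂ] E) (hHsa : IsSelfAdjoint H)
    (m : ℕ) (hm : 1 ≤ m)
    (φ : Fin m → ℝ) (P : Fin m → E →L[ℂ] E)
    (hdist : ∀ k l : Fin m, k ≠ l →
      Complex.exp (-(Complex.I * (φ k : ℂ))) ≠ Complex.exp (-(Complex.I * (φ l : ℂ))))
    (hPsa : ∀ l, IsSelfAdjoint (P l))
    (hPorth : ∀ k l : Fin m, P k * P l = if k = l then P l else 0)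
    (hPsum : ∑ l, P l = 1)
    (U : E →L[ℂ] E) (hUunitary : U ∈ unitary (E →L[ℂ] E))
    (hUspec : U = ∑ l, Complex.exp (-(Complex.I * (φ l : ℂ))) • P l)
    (η : ℝ) (hηpos : 0 < η)
    (hη : ∀ k l : Fin m, k ≠ l →
      η ≤ ‖Complex.exp (-(Complex.I * (φ k : ℂ))) - Complex.exp (-(Complex.I * (φ l : ℂ)))‖)
    (HZ : E →L[ℂ] E) (hHZ : HZ = ∑ l, P l * H * P l) :
    ∀ n : ℕ, 1 ≤ n → ∀ t : ℝ, 0 ≤ t →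
      ‖(U * NormedSpace.exp ((-(Complex.I * ((t / n : ℝ) : ℂ))) • H)) ^ n
          - U ^ n * NormedSpace.exp ((-(Complex.I * (t : ℂ))) • HZ)‖
        ≤ (2 / n) * (Real.sqrt m / η + 1) * (t * ‖H‖) * (1 + 2 * t * ‖H‖) := by
  intro n hn t ht
  -- basic notation
  set e : Fin m → ℂ := fun l => Complex.exp (-(Complex.I * (φ l : ℂ))) with he_def
  have hnR : (1:ℝ) ≤ (n:ℝ) := by exact_mod_cast hn
  have hnpos : (0:ℝ) < n := by linarith
  have hτ0 : (0:ℝ) ≤ t / n := by positivity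
  -- scalar facts
  have he0 : ∀ l, e l ≠ 0 := fun l => Complex.exp_ne_zero _
  have heconj : ∀ l, (starRingEnd ℂ) (e l) * e l = 1 := by
    intro l
    have hc : (starRingEnd ℂ) (-(Complex.I * (φ l : ℂ))) = Complex.I * (φ l : ℂ) := by
      simp [Complex.conj_ofReal]
    rw [he_def]
    simp only []
    rw [← Complex.exp_conj, hc, ← Complex.exp_add]
    simp
  -- norm of 1
  have h1n : ‖(1 : E →L[ℂ] E)‖ ≤ 1 := by
    have : (1 : E →L[ℂ] E) = ContinuousLinearMap.id ℂ E := rfl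
    rw [this]
    exact ContinuousLinearMap.norm_id_le
  have hunit_norm : ∀ x : E →L[ℂ] E, x ∈ unitary (E →L[ℂ] E) → ‖x‖ ≤ 1 := by
    intro x hx
    have hsx : star x * x = 1 := (Unitary.mem_iff.mp hx).1
    have h0 := CStarRing.norm_star_mul_self (x := x)
    rw [hsx] at h0
    nlinarith [norm_nonneg x]
  have hUnorm : ‖U‖ ≤ 1 := hunit_norm U hUunitary
  have hUU' : U * star U = 1 := (Unitary.mem_iff.mp hUunitary).2
  -- algebraic facts about P and U
  have hPstar : ∀ l, star (P l) = P l := fun l => (hPsa l).star_eq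
  have hUP : ∀ l, U * P l = e l • P l := by
    intro l
    rw [hUspec, Finset.sum_mul]
    have h0 : ∀ a : Fin m, (e a • P a) * P l = if a = l then e a • P l else 0 := by
      intro a
      rw [smul_mul_assoc, hPorth]
      split <;> simp
    rw [Finset.sum_congr rfl fun a _ => h0 a]
    simp
  have hPU : ∀ l, P l * U = e l • P l := by
    intro l
    rw [hUspec, Finset.mul_sum]
    have h0 : ∀ a : Fin m, P l * (e a • P a) = if l = a then e a • P a else 0 := by
      intro a
      rw [mul_smul_comm, hPorth]
      split <;> simp
    rw [Finset.sum_congr rfl fun a _ => h0 a]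
    simp
  have hUstar : star U = ∑ l, (starRingEnd ℂ) (e l) • P l := by
    rw [hUspec, star_sum]
    refine Finset.sum_congr rfl fun l _ => ?_
    rw [star_smul, hPstar]
    rfl
  have hU'P : ∀ l, star U * P l = (starRingEnd ℂ) (e l) • P l := by
    intro l
    rw [hUstar, Finset.sum_mul]
    have h0 : ∀ a : Fin m, ((starRingEnd ℂ) (e a) • P a) * P l
        = if a = l then (starRingEnd ℂ) (e a) • P l else 0 := by
      intro a
      rw [smul_mul_assoc, hPorth]
      split <;> simp
    rw [Finset.sum_congr rfl fun a _ => h0 a]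
    simp
  have hPU' : ∀ l, P l * star U = (starRingEnd ℂ) (e l) • P l := by
    intro l
    rw [hUstar, Finset.mul_sum]
    have h0 : ∀ a : Fin m, P l * ((starRingEnd ℂ) (e a) • P a)
        = if l = a then (starRingEnd ℂ) (e a) • P a else 0 := by
      intro a
      rw [mul_smul_comm, hPorth]
      split <;> simp
    rw [Finset.sum_congr rfl fun a _ => h0 a]
    simp
  -- HZ facts
  have hHZsa : IsSelfAdjoint HZ := by
    rw [IsSelfAdjoint, hHZ, star_sum]
    refine Finset.sum_congr rfl fun l _ => ?_
    rw [star_mul, star_mul, hPstar, hHsa.star_eq, mul_assoc]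
  have hUHZ : U * HZ = HZ * U := by
    rw [hHZ, Finset.mul_sum, Finset.sum_mul]
    refine Finset.sum_congr rfl fun l _ => ?_
    calc U * (P l * H * P l) = (U * P l) * H * P l := by noncomm_ring
      _ = (e l • P l) * H * P l := by rw [hUP]
      _ = e l • (P l * H * P l) := by simp [smul_mul_assoc]
      _ = P l * H * (e l • P l) := by rw [mul_smul_comm]
      _ = P l * H * (P l * U) := by rw [hPU]
      _ = (P l * H * P l) * U := by noncomm_ring
  -- Pythagoras consequences
  have hsum_apply : ∀ x : E, ∑ l, P l x = x := by
    intro x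
    have h0 := congrFun (congrArg DFunLike.coe hPsum) x
    simpa using h0
  have hpyth_x : ∀ x : E, ∑ l, ‖P l x‖ ^ 2 = ‖x‖ ^ 2 := by
    intro x
    have h0 := pyth_sum P hPsa hPorth (fun _ => x)
    rw [hsum_apply] at h0
    exact h0.symm
  have hPcontr : ∀ (l : Fin m) (y : E), ‖P l y‖ ≤ ‖y‖ := by
    intro l y
    have h0 : ‖P l y‖ ^ 2 ≤ ∑ k, ‖P k y‖ ^ 2 :=
      Finset.single_le_sum (f := fun k => ‖P k y‖ ^ 2) (fun k _ => by positivity)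
        (Finset.mem_univ l)
    rw [hpyth_x] at h0
    nlinarith [norm_nonneg (P l y), norm_nonneg y]
  have hHZnorm : ‖HZ‖ ≤ ‖H‖ := by
    refine ContinuousLinearMap.opNorm_le_bound _ (norm_nonneg H) fun x => ?_
    have hHZx : HZ x = ∑ l, P l (H (P l x)) := by
      rw [hHZ]
      simp [ContinuousLinearMap.sum_apply, ContinuousLinearMap.mul_apply]
    have h1 : ‖HZ x‖ ^ 2 = ∑ l, ‖P l (H (P l x))‖ ^ 2 := by
      rw [hHZx]; exact pyth_sum P hPsa hPorth _
    have h2 : ∀ l : Fin m, ‖P l (H (P l x))‖ ^ 2 ≤ ‖H‖ ^ 2 * ‖P l x‖ ^ 2 := by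
      intro l
      have ha := hPcontr l (H (P l x))
      have hb := H.le_opNorm (P l x)
      nlinarith [norm_nonneg (P l (H (P l x))), norm_nonneg (H (P l x)), norm_nonneg (P l x),
        norm_nonneg H]
    have h3 : ‖HZ x‖ ^ 2 ≤ ‖H‖ ^ 2 * ‖x‖ ^ 2 := by
      rw [h1]
      calc ∑ l, ‖P l (H (P l x))‖ ^ 2 ≤ ∑ l, ‖H‖ ^ 2 * ‖P l x‖ ^ 2 :=
            Finset.sum_le_sum fun l _ => h2 l
        _ = ‖H‖ ^ 2 * ∑ l, ‖P l x‖ ^ 2 := by rw [Finset.mul_sum]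
        _ = ‖H‖ ^ 2 * ‖x‖ ^ 2 := by rw [hpyth_x]
    nlinarith [norm_nonneg (HZ x), mul_nonneg (norm_nonneg H) (norm_nonneg x)]
  -- the S operator
  set c : Fin m → Fin m → ℂ := fun k l => e k / (e k - e l) with hc_def
  have he_norm : ∀ l, ‖e l‖ = 1 := by
    intro l
    rw [he_def]
    simp only []
    rw [Complex.norm_exp]
    simp
  have hc_norm : ∀ k l : Fin m, k ≠ l → ‖c k l‖ ≤ 1 / η := by
    intro k l hkl
    have h1 : η ≤ ‖e k - e l‖ := hη k l hkl
    rw [hc_def]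
    simp only []
    rw [norm_div, he_norm]
    exact one_div_le_one_div_of_le hηpos h1
  set S : E →L[ℂ] E := ∑ k, ∑ l, if k = l then 0 else c k l • (P k * H * P l) with hS_def
  have hSnorm : ‖S‖ ≤ Real.sqrt m / η * ‖H‖ := by
    have hrhs0 : (0:ℝ) ≤ Real.sqrt m / η * ‖H‖ := by positivity
    refine ContinuousLinearMap.opNorm_le_bound _ hrhs0 fun x => ?_
    set z : Fin m → E := fun k => ∑ l, (if k = l then 0 else c k l • P l x) with hz_def
    have hSx : S x = ∑ k, P k (H (z k)) := by
      rw [hS_def]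
      rw [ContinuousLinearMap.sum_apply]
      refine Finset.sum_congr rfl fun k _ => ?_
      rw [ContinuousLinearMap.sum_apply, hz_def]
      simp only []
      rw [map_sum, map_sum]
      refine Finset.sum_congr rfl fun l _ => ?_
      by_cases hkl : k = l
      · simp [hkl]
      · simp [hkl, ContinuousLinearMap.mul_apply]
    have hzk : ∀ k, ‖z k‖ ^ 2 ≤ (1 / η) ^ 2 * ‖x‖ ^ 2 := by
      intro k
      have hw : ∀ l : Fin m, (if k = l then 0 else c k l • P l x)
          = P l (if k = l then 0 else c k l • x) := by
        intro l
        by_cases hkl : k = l <;> simp [hkl]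
      have h1 : ‖z k‖ ^ 2 = ∑ l, ‖P l (if k = l then 0 else c k l • x)‖ ^ 2 := by
        rw [hz_def]
        simp only []
        rw [Finset.sum_congr rfl fun l _ => hw l]
        exact pyth_sum P hPsa hPorth _
      have h2 : ∀ l : Fin m, ‖P l (if k = l then 0 else c k l • x)‖ ^ 2
          ≤ (1 / η) ^ 2 * ‖P l x‖ ^ 2 := by
        intro l
        by_cases hkl : k = l
        · simp [hkl]
          positivity
        · rw [if_neg hkl]
          have h3 : P l (c k l • x) = c k l • P l x := map_smul _ _ _
          rw [h3, norm_smul, mul_pow]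
          have h4 := hc_norm k l hkl
          have h5 : (0:ℝ) ≤ ‖c k l‖ := norm_nonneg _
          exact mul_le_mul_of_nonneg_right (pow_le_pow_left₀ h5 h4 2) (by positivity)
      calc ‖z k‖ ^ 2 = ∑ l, ‖P l (if k = l then 0 else c k l • x)‖ ^ 2 := h1
        _ ≤ ∑ l : Fin m, (1 / η) ^ 2 * ‖P l x‖ ^ 2 := Finset.sum_le_sum fun l _ => h2 l
        _ = (1 / η) ^ 2 * ∑ l, ‖P l x‖ ^ 2 := by rw [Finset.mul_sum]
        _ = (1 / η) ^ 2 * ‖x‖ ^ 2 := by rw [hpyth_x]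
    have hSx2 : ‖S x‖ ^ 2 ≤ m * (‖H‖ ^ 2 * ((1 / η) ^ 2 * ‖x‖ ^ 2)) := by
      have h1 : ‖S x‖ ^ 2 = ∑ k, ‖P k (H (z k))‖ ^ 2 := by
        rw [hSx]; exact pyth_sum P hPsa hPorth _
      have h2 : ∀ k : Fin m, ‖P k (H (z k))‖ ^ 2 ≤ ‖H‖ ^ 2 * ((1 / η) ^ 2 * ‖x‖ ^ 2) := by
        intro k
        have ha := hPcontr k (H (z k))
        have hb := H.le_opNorm (z k)
        have hc2 := hzk k
        nlinarith [norm_nonneg (P k (H (z k))), norm_nonneg (H (z k)), norm_nonneg (z k),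
          norm_nonneg H, norm_nonneg x, sq_nonneg (1/η)]
      calc ‖S x‖ ^ 2 = ∑ k, ‖P k (H (z k))‖ ^ 2 := h1
        _ ≤ ∑ _k : Fin m, ‖H‖ ^ 2 * ((1 / η) ^ 2 * ‖x‖ ^ 2) :=
            Finset.sum_le_sum fun k _ => h2 k
        _ = m * (‖H‖ ^ 2 * ((1 / η) ^ 2 * ‖x‖ ^ 2)) := by
            rw [Finset.sum_const, Finset.card_univ, Fintype.card_fin]
            push_cast
            ring
    have hm0 : (0:ℝ) ≤ (m:ℝ) := by positivity
    have hsq : Real.sqrt m * Real.sqrt m = (m:ℝ) := Real.mul_self_sqrt hm0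
    have hBsq : (Real.sqrt m / η * ‖H‖ * ‖x‖) ^ 2 = m * (‖H‖ ^ 2 * ((1 / η) ^ 2 * ‖x‖ ^ 2)) := by
      rw [mul_pow, mul_pow, div_pow, Real.sq_sqrt hm0]
      field_simp
    calc ‖S x‖ = Real.sqrt (‖S x‖ ^ 2) := (Real.sqrt_sq (norm_nonneg _)).symm
      _ ≤ Real.sqrt ((Real.sqrt m / η * ‖H‖ * ‖x‖) ^ 2) :=
          Real.sqrt_le_sqrt (by rw [hBsq]; exact hSx2)
      _ = Real.sqrt m / η * ‖H‖ * ‖x‖ := Real.sqrt_sq (by positivity)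
  -- key identity
  have hscal : ∀ k l : Fin m, k ≠ l → c k l - (starRingEnd ℂ) (e k) * e l * c k l = 1 := by
    intro k l hkl
    have hsub : e k - e l ≠ 0 := sub_ne_zero.mpr (hdist k l hkl)
    have hck := heconj k
    rw [hc_def]
    simp only []
    field_simp
    linear_combination (-(e l)) * hck
  have hdiag : HZ = ∑ k, ∑ l, if k = l then P k * H * P l else 0 := by
    rw [hHZ]
    symm
    refine Finset.sum_congr rfl fun k _ => ?_
    simp
  have hfull : H = ∑ k, ∑ l, P k * H * P l := by
    conv_lhs => rw [show H = (∑ k, P k) * H * (∑ l, P l) by rw [hPsum]; simp]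
    rw [Finset.sum_mul, Finset.sum_mul]
    refine Finset.sum_congr rfl fun k _ => ?_
    rw [Finset.mul_sum]
  have hHmHZ : H - HZ = ∑ k, ∑ l, if k = l then 0 else P k * H * P l := by
    conv_lhs => rw [hfull, hdiag]
    rw [← Finset.sum_sub_distrib]
    refine Finset.sum_congr rfl fun k _ => ?_
    rw [← Finset.sum_sub_distrib]
    refine Finset.sum_congr rfl fun l _ => ?_
    by_cases hkl : k = l <;> simp [hkl]
  have hUSU : star U * S * U
      = ∑ k, ∑ l, if k = l then 0
          else ((starRingEnd ℂ) (e k) * e l * c k l) • (P k * H * P l) := by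
    rw [hS_def]
    calc star U * (∑ k, ∑ l, if k = l then 0 else c k l • (P k * H * P l)) * U
        = ∑ k, star U * (∑ l, if k = l then 0 else c k l • (P k * H * P l)) * U := by
          rw [Finset.mul_sum, Finset.sum_mul]
      _ = ∑ k, ∑ l, star U * (if k = l then 0 else c k l • (P k * H * P l)) * U := by
          refine Finset.sum_congr rfl fun k _ => ?_
          rw [Finset.mul_sum, Finset.sum_mul]
      _ = ∑ k, ∑ l, if k = l then 0
            else ((starRingEnd ℂ) (e k) * e l * c k l) • (P k * H * P l) := by
          refine Finset.sum_congr rfl fun k _ => Finset.sum_congr rfl fun l _ => ?_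
          by_cases hkl : k = l
          · simp [hkl]
          · rw [if_neg hkl, if_neg hkl]
            have hassoc : star U * (c k l • (P k * H * P l)) * U
                = c k l • ((star U * P k) * H * (P l * U)) := by
              rw [mul_smul_comm, smul_mul_assoc]
              try congr 1
              try noncomm_ring
            rw [hassoc, hU'P, hPU]
            simp only [smul_mul_assoc, mul_smul_comm, smul_smul]
            try congr 1
            try ring
  have hD : H - HZ = S - star U * S * U := by
    rw [hHmHZ, hUSU, hS_def]
    rw [← Finset.sum_sub_distrib]
    refine Finset.sum_congr rfl fun k _ => ?_
    rw [← Finset.sum_sub_distrib]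
    refine Finset.sum_congr rfl fun l _ => ?_
    by_cases hkl : k = l
    · simp [hkl]
    · rw [if_neg hkl, if_neg hkl, if_neg hkl, ← sub_smul, hscal k l hkl, one_smul]
  -- exponentials
  set τc : ℂ := -(Complex.I * ((t / n : ℝ) : ℂ)) with hτc_def
  set V : E →L[ℂ] E := NormedSpace.exp (τc • H) with hV_def
  set W : E →L[ℂ] E := NormedSpace.exp (τc • HZ) with hW_def
  have hτc_norm : ‖τc‖ = t / n := by
    rw [hτc_def, norm_neg, norm_mul, Complex.norm_I, one_mul, Complex.norm_real]
    exact abs_of_nonneg hτ0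
  have hconjτ : (starRingEnd ℂ) τc = -τc := by
    rw [hτc_def]
    simp [Complex.conj_ofReal]
  have hskew : ∀ T : E →L[ℂ] E, IsSelfAdjoint T → τc • T ∈ skewAdjoint (E →L[ℂ] E) := by
    intro T hT
    rw [skewAdjoint.mem_iff, star_smul, hT.star_eq]
    rw [show star τc = (starRingEnd ℂ) τc from rfl, hconjτ, neg_smul]
  have hVu : V ∈ unitary (E →L[ℂ] E) := by
    rw [hV_def]
    letI : NormedAlgebra ℚ (E →L[ℂ] E) := NormedAlgebra.restrictScalars ℚ ℂ _
    exact NormedSpace.exp_mem_unitary_of_mem_skewAdjoint (hskew H hHsa)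
  have hWu : W ∈ unitary (E →L[ℂ] E) := by
    rw [hW_def]
    letI : NormedAlgebra ℚ (E →L[ℂ] E) := NormedAlgebra.restrictScalars ℚ ℂ _
    exact NormedSpace.exp_mem_unitary_of_mem_skewAdjoint (hskew HZ hHZsa)
  have hVnorm : ‖V‖ ≤ 1 := hunit_norm V hVu
  have hWnorm : ‖W‖ ≤ 1 := hunit_norm W hWu
  have hAnorm : ‖U * V‖ ≤ 1 := by
    calc ‖U * V‖ ≤ ‖U‖ * ‖V‖ := norm_mul_le _ _
      _ ≤ 1 * 1 := mul_le_mul hUnorm hVnorm (norm_nonneg _) zero_le_one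
      _ = 1 := one_mul 1
  have hBnorm : ‖U * W‖ ≤ 1 := by
    calc ‖U * W‖ ≤ ‖U‖ * ‖W‖ := norm_mul_le _ _
      _ ≤ 1 * 1 := mul_le_mul hUnorm hWnorm (norm_nonneg _) zero_le_one
      _ = 1 := one_mul 1
  have hUW : U * W = W * U := by
    have hcomm : Commute U (τc • HZ) := Commute.smul_right hUHZ τc
    exact hcomm.exp_right
  have hBn : U ^ n * NormedSpace.exp ((-(Complex.I * (t : ℂ))) • HZ) = (U * W) ^ n := by
    have hWn : W ^ n = NormedSpace.exp ((-(Complex.I * (t : ℂ))) • HZ) := by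
      letI : NormedAlgebra ℚ (E →L[ℂ] E) := NormedAlgebra.restrictScalars ℚ ℂ _
      rw [hW_def, ← NormedSpace.exp_nsmul]
      congr 1
      rw [← Nat.cast_smul_eq_nsmul ℂ, smul_smul]
      congr 1
      rw [hτc_def]
      have hne : (n:ℂ) ≠ 0 := by
        exact_mod_cast (by positivity : (0:ℝ) < (n:ℝ)).ne'
      push_cast
      field_simp
    rw [Commute.mul_pow hUW, hWn]
  -- decomposition
  set RV : E →L[ℂ] E := V - 1 - τc • H with hRV_def
  set RW : E →L[ℂ] E := W - 1 - τc • HZ with hRW_def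
  have hdecomp : U * V - U * W = U * (RV - RW) + τc • (U * (S - star U * S * U)) := by
    have h1 : V - W = (RV - RW) + τc • (S - star U * S * U) := by
      rw [← hD, hRV_def, hRW_def, smul_sub]
      abel
    calc U * V - U * W = U * (V - W) := (mul_sub U V W).symm
      _ = U * ((RV - RW) + τc • (S - star U * S * U)) := by rw [h1]
      _ = U * (RV - RW) + τc • (U * (S - star U * S * U)) := by rw [mul_add, mul_smul_comm]
  have hmain : (U * V) ^ n - (U * W) ^ n
      = (∑ j ∈ Finset.range n, (U*V)^(n-1-j) * (U * (RV - RW)) * (U*W)^j)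
        + τc • ∑ j ∈ Finset.range n, (U*V)^(n-1-j) * (U * (S - star U * S * U)) * (U*W)^j := by
    rw [tele_pow_sub_pow]
    rw [Finset.smul_sum, ← Finset.sum_add_distrib]
    refine Finset.sum_congr rfl fun j _ => ?_
    rw [hdecomp, mul_add, add_mul, mul_smul_comm, smul_mul_assoc]
  -- sandwich bound
  have hsand : ∀ (X : E →L[ℂ] E) (p j : ℕ), ‖(U*V)^p * X * (U*W)^j‖ ≤ ‖X‖ := by
    intro X p j
    have hp := norm_pow_le_one' h1n hAnorm p
    have hj := norm_pow_le_one' h1n hBnorm j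
    calc ‖(U*V)^p * X * (U*W)^j‖ ≤ ‖(U*V)^p * X‖ * ‖(U*W)^j‖ := norm_mul_le _ _
      _ ≤ ‖(U*V)^p‖ * ‖X‖ * ‖(U*W)^j‖ :=
          mul_le_mul_of_nonneg_right (norm_mul_le _ _) (norm_nonneg _)
      _ ≤ 1 * ‖X‖ * 1 := by
          apply mul_le_mul (mul_le_mul hp le_rfl (norm_nonneg _) zero_le_one) hj
            (norm_nonneg _) (by positivity)
      _ = ‖X‖ := by ring
  have hT1 : ‖∑ j ∈ Finset.range n, (U*V)^(n-1-j) * (U * (RV - RW)) * (U*W)^j‖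
      ≤ n * (‖RV‖ + ‖RW‖) := by
    have hX : ‖U * (RV - RW)‖ ≤ ‖RV‖ + ‖RW‖ := by
      calc ‖U * (RV - RW)‖ ≤ ‖U‖ * ‖RV - RW‖ := norm_mul_le _ _
        _ ≤ 1 * (‖RV‖ + ‖RW‖) := mul_le_mul hUnorm (norm_sub_le _ _) (norm_nonneg _) zero_le_one
        _ = ‖RV‖ + ‖RW‖ := one_mul _
    calc ‖∑ j ∈ Finset.range n, (U*V)^(n-1-j) * (U * (RV - RW)) * (U*W)^j‖
        ≤ ∑ j ∈ Finset.range n, ‖(U*V)^(n-1-j) * (U * (RV - RW)) * (U*W)^j‖ := norm_sum_le _ _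
      _ ≤ ∑ _j ∈ Finset.range n, (‖RV‖ + ‖RW‖) :=
          Finset.sum_le_sum fun j _ => (hsand _ _ _).trans hX
      _ = n * (‖RV‖ + ‖RW‖) := by rw [Finset.sum_const, Finset.card_range, nsmul_eq_mul]
  have hT2 : ‖∑ j ∈ Finset.range n, (U*V)^(n-1-j) * (U * (S - star U * S * U)) * (U*W)^j‖
      ≤ 2 * ‖S‖ + ((n - 1 : ℕ) : ℝ) * ((‖V - 1‖ + ‖W - 1‖) * ‖S‖) :=
    tele_bound U (star U) V W S n hn h1n hUU' hUW hUnorm hAnorm hBnorm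
  -- put together
  set μ : ℝ := Real.sqrt m / η with hμ_def
  have hμ0 : 0 ≤ μ := by positivity
  have hS0 : (0:ℝ) ≤ ‖S‖ := norm_nonneg _
  have hSmu : ‖S‖ ≤ μ * ‖H‖ := by rw [hμ_def]; exact hSnorm
  rw [hBn]
  by_cases hbig : t * ‖H‖ ≤ (n:ℝ)/2
  · -- small-step regime
    set x : ℝ := (t/n) * ‖H‖ with hx_def
    have hx0 : 0 ≤ x := by rw [hx_def]; positivity
    have hx12 : x ≤ 1/2 := by
      rw [hx_def]
      rw [div_mul_eq_mul_div, div_le_iff₀ hnpos]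
      linarith
    have hex : Real.exp x ≤ 5/3 := by
      have h1 := Real.exp_one_lt_d9
      have h2 : Real.exp x ≤ Real.exp (1/2) := Real.exp_le_exp.mpr hx12
      have h3 : Real.exp (1/2) * Real.exp (1/2) = Real.exp 1 := by
        rw [← Real.exp_add]; norm_num
      nlinarith [Real.exp_pos (1/2)]
    have hxn : ‖τc • H‖ = x := by rw [norm_smul, hτc_norm, hx_def]
    have hxn' : ‖τc • HZ‖ ≤ x := by
      rw [norm_smul, hτc_norm, hx_def]
      exact mul_le_mul_of_nonneg_left hHZnorm hτ0
    have hxz0 : (0:ℝ) ≤ ‖τc • HZ‖ := norm_nonneg _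
    have hexz : Real.exp ‖τc • HZ‖ ≤ 5/3 :=
      (Real.exp_le_exp.mpr hxn').trans hex
    have hV1 : ‖V - 1‖ ≤ (5/3) * x := by
      have h0 := norm_exp_sub_one_le'' (τc • H)
      rw [← hV_def, hxn] at h0
      calc ‖V - 1‖ ≤ x * Real.exp x := h0
        _ ≤ x * (5/3) := mul_le_mul_of_nonneg_left hex hx0
        _ = (5/3) * x := by ring
    have hW1 : ‖W - 1‖ ≤ (5/3) * x := by
      have h0 := norm_exp_sub_one_le'' (τc • HZ)
      rw [← hW_def] at h0
      calc ‖W - 1‖ ≤ ‖τc • HZ‖ * Real.exp ‖τc • HZ‖ := h0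
        _ ≤ x * (5/3) := mul_le_mul hxn' hexz (Real.exp_pos _).le hx0
        _ = (5/3) * x := by ring
    have hRVb : ‖RV‖ ≤ (5/6) * x^2 := by
      have h0 := norm_exp_sub_one_sub_le (τc • H)
      rw [← hV_def, hxn, ← hRV_def] at h0
      calc ‖RV‖ ≤ x^2/2 * Real.exp x := h0
        _ ≤ x^2/2 * (5/3) := mul_le_mul_of_nonneg_left hex (by positivity)
        _ = (5/6) * x^2 := by ring
    have hRWb : ‖RW‖ ≤ (5/6) * x^2 := by
      have h0 := norm_exp_sub_one_sub_le (τc • HZ)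
      rw [← hW_def, ← hRW_def] at h0
      calc ‖RW‖ ≤ ‖τc • HZ‖^2/2 * Real.exp ‖τc • HZ‖ := h0
        _ ≤ x^2/2 * (5/3) := by
            apply mul_le_mul _ hexz (Real.exp_pos _).le (by positivity)
            have := pow_le_pow_left₀ hxz0 hxn' 2
            linarith
        _ = (5/6) * x^2 := by ring
    have hcast : ((n - 1 : ℕ) : ℝ) ≤ (n:ℝ) := by
      have : (n - 1 : ℕ) ≤ n := Nat.sub_le n 1
      exact_mod_cast this
    have hchain : ‖(U * V) ^ n - (U * W) ^ n‖
        ≤ (n:ℝ) * ((5/6)*x^2 + (5/6)*x^2)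
          + (t/n) * (2 * (μ * ‖H‖) + (n:ℝ) * (((5/3)*x + (5/3)*x) * (μ * ‖H‖))) := by
      rw [hmain]
      have hstep1 : ‖(∑ j ∈ Finset.range n, (U*V)^(n-1-j) * (U * (RV - RW)) * (U*W)^j)
          + τc • ∑ j ∈ Finset.range n, (U*V)^(n-1-j) * (U * (S - star U * S * U)) * (U*W)^j‖
          ≤ (n:ℝ) * (‖RV‖ + ‖RW‖)
            + (t/n) * (2 * ‖S‖ + ((n - 1 : ℕ) : ℝ) * ((‖V - 1‖ + ‖W - 1‖) * ‖S‖)) := by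
        calc ‖(∑ j ∈ Finset.range n, (U*V)^(n-1-j) * (U * (RV - RW)) * (U*W)^j)
            + τc • ∑ j ∈ Finset.range n, (U*V)^(n-1-j) * (U * (S - star U * S * U)) * (U*W)^j‖
            ≤ ‖∑ j ∈ Finset.range n, (U*V)^(n-1-j) * (U * (RV - RW)) * (U*W)^j‖
              + ‖τc‖ * ‖∑ j ∈ Finset.range n,
                  (U*V)^(n-1-j) * (U * (S - star U * S * U)) * (U*W)^j‖ := by
              rw [← norm_smul τc]
              exact norm_add_le _ _
          _ ≤ (n:ℝ) * (‖RV‖ + ‖RW‖)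
              + (t/n) * (2 * ‖S‖ + ((n - 1 : ℕ) : ℝ) * ((‖V - 1‖ + ‖W - 1‖) * ‖S‖)) := by
              rw [hτc_norm]
              exact add_le_add hT1 (mul_le_mul_of_nonneg_left hT2 hτ0)
      refine hstep1.trans ?_
      have hq1 : (n:ℝ) * (‖RV‖ + ‖RW‖) ≤ (n:ℝ) * ((5/6)*x^2 + (5/6)*x^2) :=
        mul_le_mul_of_nonneg_left (add_le_add hRVb hRWb) (by positivity)
      have hq2 : 2 * ‖S‖ + ((n - 1 : ℕ) : ℝ) * ((‖V - 1‖ + ‖W - 1‖) * ‖S‖)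
          ≤ 2 * (μ * ‖H‖) + (n:ℝ) * (((5/3)*x + (5/3)*x) * (μ * ‖H‖)) := by
        have hVW0 : (0:ℝ) ≤ ‖V - 1‖ + ‖W - 1‖ := by positivity
        have hfac : (‖V - 1‖ + ‖W - 1‖) * ‖S‖ ≤ ((5/3)*x + (5/3)*x) * (μ * ‖H‖) := by
          apply mul_le_mul (add_le_add hV1 hW1) hSmu hS0
          positivity
        apply add_le_add (mul_le_mul_of_nonneg_left hSmu (by norm_num))
        calc ((n - 1 : ℕ) : ℝ) * ((‖V - 1‖ + ‖W - 1‖) * ‖S‖)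
            ≤ (n:ℝ) * ((‖V - 1‖ + ‖W - 1‖) * ‖S‖) :=
              mul_le_mul_of_nonneg_right hcast (by positivity)
          _ ≤ (n:ℝ) * (((5/3)*x + (5/3)*x) * (μ * ‖H‖)) :=
              mul_le_mul_of_nonneg_left hfac (by positivity)
      exact add_le_add hq1 (mul_le_mul_of_nonneg_left hq2 hτ0)
    refine hchain.trans ?_
    have h4 : (n:ℝ) * ((5/6)*x^2 + (5/6)*x^2)
        + (t/n) * (2 * (μ * ‖H‖) + (n:ℝ) * (((5/3)*x + (5/3)*x) * (μ * ‖H‖)))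
        = (5/3)*(n:ℝ)*x^2 + 2*μ*x + (10/3)*μ*(n:ℝ)*x^2 := by
      rw [hx_def]
      field_simp
      ring
    have h2s : t * ‖H‖ = (n:ℝ) * x := by
      rw [hx_def]
      field_simp
    have h3 : (2/(n:ℝ)) * (μ + 1) * ((n:ℝ)*x) * (1 + 2*((n:ℝ)*x))
        = 2*(μ+1)*x*(1+2*((n:ℝ)*x)) := by
      field_simp
    rw [h4]
    have hgoal2 : (2 / (n:ℝ)) * (μ + 1) * (t * ‖H‖) * (1 + 2 * t * ‖H‖)
        = 2*(μ+1)*x*(1+2*((n:ℝ)*x)) := by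
      rw [show 2 * t * ‖H‖ = 2 * (t * ‖H‖) from by ring, h2s, h3]
    rw [hgoal2]
    nlinarith [mul_nonneg (mul_nonneg (by positivity : (0:ℝ) ≤ (n:ℝ)) hx0) hx0,
      mul_nonneg hμ0 (mul_nonneg (mul_nonneg (by positivity : (0:ℝ) ≤ (n:ℝ)) hx0) hx0),
      hx0, hμ0, mul_nonneg hμ0 hx0]
  · -- large-step regime: trivial bound by 2
    push_neg at hbig
    have hLHS : ‖(U * V) ^ n - (U * W) ^ n‖ ≤ 2 := by
      calc ‖(U * V) ^ n - (U * W) ^ n‖ ≤ ‖(U * V) ^ n‖ + ‖(U * W) ^ n‖ := norm_sub_le _ _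
        _ ≤ 1 + 1 := add_le_add (norm_pow_le_one' h1n hAnorm n) (norm_pow_le_one' h1n hBnorm n)
        _ = 2 := by norm_num
    refine hLHS.trans ?_
    have hs0 : (0:ℝ) ≤ t * ‖H‖ := by positivity
    have h3 : (2/(n:ℝ)) * (μ + 1) * (t * ‖H‖) * (1 + 2 * t * ‖H‖)
        = (2 * ((μ + 1) * ((t * ‖H‖) * (1 + 2 * (t * ‖H‖))))) / n := by
      field_simp
    rw [h3, le_div_iff₀ hnpos]
    nlinarith [mul_nonneg hμ0 (mul_nonneg hs0 (by positivity : (0:ℝ) ≤ 1 + 2*(t*‖H‖))),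
      mul_pos (lt_of_lt_of_le (by linarith : (0:ℝ) < (n:ℝ)/2) hbig.le)
        (lt_of_lt_of_le (by linarith : (0:ℝ) < (n:ℝ)/2) hbig.le), hnR, hbig]
end

section
/- Existence, uniqueness and continuity of the propagator for locally integrable generators: Let H : ℝ → B(ℋ) be a locally integrable map of bounded operators. Then the Volterra integral equation U(t) = 1 − i ∫₀ᵗ H(s) U(s) ds has a solution U : ℝ → B(ℋ) which is norm-continuous and satisfies ‖U(t)‖ ≤ exp(∫₀ᵗ ‖H(s)‖ ds) for every t ≥ 0; moreover, any locally bounded measurable solution of the same integral equation coincides with U. -/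
open MeasureTheory intervalIntegral

variable {E : Type*} [NormedAddCommGroup E] [InnerProductSpace ℂ E] [CompleteSpace E]
  [TopologicalSpace.SeparableSpace E]

open Filter Topology

set_option maxHeartbeats 1000000
set_option synthInstance.maxHeartbeats 1000000
set_option linter.unusedSectionVars false


private lemma parts_aux {f₁ f₂ : ℝ → ℝ} {t : ℝ}
    (h₁ : IntegrableOn f₁ (Set.Ioc 0 t)) (h₂ : IntegrableOn f₂ (Set.Ioc 0 t)) :
    (∫ s in Set.Ioc (0:ℝ) t, f₁ s) * (∫ s in Set.Ioc (0:ℝ) t, f₂ s)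
      = (∫ s in Set.Ioc (0:ℝ) t, f₁ s * ∫ u in Set.Ioc (0:ℝ) s, f₂ u)
        + ∫ s in Set.Ioc (0:ℝ) t, f₂ s * ∫ u in Set.Ioc (0:ℝ) s, f₁ u := by
  have hΦ : Integrable (fun p : ℝ × ℝ => f₁ p.1 * f₂ p.2)
      ((volume.restrict (Set.Ioc (0:ℝ) t)).prod (volume.restrict (Set.Ioc (0:ℝ) t))) :=
    h₁.mul_prod h₂
  have hA : MeasurableSet {p : ℝ × ℝ | p.2 ≤ p.1} :=
    measurableSet_le measurable_snd measurable_fst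
  have htotal : ∫ p : ℝ × ℝ, f₁ p.1 * f₂ p.2
        ∂((volume.restrict (Set.Ioc (0:ℝ) t)).prod (volume.restrict (Set.Ioc (0:ℝ) t)))
      = (∫ s in Set.Ioc (0:ℝ) t, f₁ s) * (∫ s in Set.Ioc (0:ℝ) t, f₂ s) :=
    integral_prod_mul f₁ f₂
  have e1 : ∫ p in {p : ℝ × ℝ | p.2 ≤ p.1}, f₁ p.1 * f₂ p.2
        ∂((volume.restrict (Set.Ioc (0:ℝ) t)).prod (volume.restrict (Set.Ioc (0:ℝ) t)))
      = ∫ s in Set.Ioc (0:ℝ) t, f₁ s * ∫ u in Set.Ioc (0:ℝ) s, f₂ u := by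
    rw [← MeasureTheory.integral_indicator hA, integral_prod _ (hΦ.indicator hA)]
    refine setIntegral_congr_fun measurableSet_Ioc (fun s hs => ?_)
    have e : (fun u => Set.indicator {p : ℝ × ℝ | p.2 ≤ p.1}
          (fun p : ℝ × ℝ => f₁ p.1 * f₂ p.2) (s, u))
        = fun u => Set.indicator (Set.Iic s) (fun u => f₁ s * f₂ u) u := by
      funext u
      by_cases h : u ≤ s <;> simp [Set.indicator_apply, h]
    rw [e, MeasureTheory.integral_indicator measurableSet_Iic,
      Measure.restrict_restrict measurableSet_Iic]
    have : Set.Iic s ∩ Set.Ioc 0 t = Set.Ioc 0 s := by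
      ext u
      simp only [Set.mem_inter_iff, Set.mem_Iic, Set.mem_Ioc]
      exact ⟨fun ⟨h1, h2, _⟩ => ⟨h2, h1⟩, fun ⟨h1, h2⟩ => ⟨h2, h1, h2.trans hs.2⟩⟩
    rw [this, MeasureTheory.integral_const_mul]
  have e2 : ∫ p in {p : ℝ × ℝ | p.2 ≤ p.1}ᶜ, f₁ p.1 * f₂ p.2
        ∂((volume.restrict (Set.Ioc (0:ℝ) t)).prod (volume.restrict (Set.Ioc (0:ℝ) t)))
      = ∫ s in Set.Ioc (0:ℝ) t, f₂ s * ∫ u in Set.Ioc (0:ℝ) s, f₁ u := by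
    rw [← MeasureTheory.integral_indicator hA.compl, integral_prod_symm _ (hΦ.indicator hA.compl)]
    refine setIntegral_congr_fun measurableSet_Ioc (fun u hu => ?_)
    have e : (fun s => Set.indicator {p : ℝ × ℝ | p.2 ≤ p.1}ᶜ
          (fun p : ℝ × ℝ => f₁ p.1 * f₂ p.2) (s, u))
        = fun s => Set.indicator (Set.Iio u) (fun s => f₁ s * f₂ u) s := by
      funext s
      by_cases h : s < u
      · simp [Set.indicator_apply, h, not_le.2 h]
      · simp [Set.indicator_apply, h, not_lt.1 h]
    rw [e, MeasureTheory.integral_indicator measurableSet_Iio,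
      Measure.restrict_restrict measurableSet_Iio]
    have : Set.Iio u ∩ Set.Ioc 0 t = Set.Ioo 0 u := by
      ext s
      simp only [Set.mem_inter_iff, Set.mem_Iio, Set.mem_Ioc, Set.mem_Ioo]
      exact ⟨fun ⟨h1, h2, _⟩ => ⟨h2, h1⟩, fun ⟨h1, h2⟩ => ⟨h2, h1, h2.le.trans hu.2⟩⟩
    rw [this, MeasureTheory.integral_mul_const, ← integral_Ioc_eq_integral_Ioo, mul_comm]
  rw [← htotal, ← integral_add_compl hA hΦ, e1, e2]

private lemma keyEq_aux {h : ℝ → ℝ} (hint : ∀ a b : ℝ, IntervalIntegrable h volume a b) :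
    ∀ (n : ℕ) (t : ℝ), 0 ≤ t →
      ∫ s in (0:ℝ)..t, h s * (∫ u in (0:ℝ)..s, h u) ^ n
        = (∫ s in (0:ℝ)..t, h s) ^ (n + 1) / (n + 1) := by
  intro n
  induction n with
  | zero => intro t _; simp
  | succ n ih =>
    intro t ht
    have hG : Continuous fun x : ℝ => ∫ u in (0:ℝ)..x, h u :=
      intervalIntegral.continuous_primitive hint 0
    have hf₁ : IntervalIntegrable (fun s => h s * (∫ u in (0:ℝ)..s, h u) ^ n) volume 0 t :=
      (hint 0 t).mul_continuousOn ((hG.pow n).continuousOn)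
    have hI₁ : IntegrableOn (fun s => h s * (∫ u in (0:ℝ)..s, h u) ^ n) (Set.Ioc 0 t) :=
      (intervalIntegrable_iff_integrableOn_Ioc_of_le ht).1 hf₁
    have hIh : IntegrableOn h (Set.Ioc 0 t) :=
      (intervalIntegrable_iff_integrableOn_Ioc_of_le ht).1 (hint 0 t)
    have P := parts_aux hI₁ hIh
    have conv : ∀ s : ℝ, 0 ≤ s → ∫ u in Set.Ioc (0:ℝ) s, h u = ∫ u in (0:ℝ)..s, h u :=
      fun s hs => (integral_of_le hs).symm
    have convf : ∀ s : ℝ, 0 ≤ s →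
        ∫ u in Set.Ioc (0:ℝ) s, h u * (∫ v in (0:ℝ)..u, h v) ^ n
          = ∫ u in (0:ℝ)..s, h u * (∫ v in (0:ℝ)..u, h v) ^ n :=
      fun s hs => (integral_of_le hs).symm
    have E1 : ∫ s in Set.Ioc (0:ℝ) t,
          (h s * (∫ u in (0:ℝ)..s, h u) ^ n) * ∫ u in Set.Ioc (0:ℝ) s, h u
        = ∫ s in (0:ℝ)..t, h s * (∫ u in (0:ℝ)..s, h u) ^ (n + 1) := by
      rw [← integral_of_le ht]
      refine integral_congr ?_
      intro s hs
      rw [Set.uIcc_of_le ht] at hs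
      dsimp only
      rw [conv s hs.1, pow_succ]
      ring
    have E2 : ∫ s in Set.Ioc (0:ℝ) t,
          h s * ∫ u in Set.Ioc (0:ℝ) s, h u * (∫ v in (0:ℝ)..u, h v) ^ n
        = (∫ s in (0:ℝ)..t, h s * (∫ u in (0:ℝ)..s, h u) ^ (n + 1)) / (n + 1) := by
      rw [← integral_of_le ht, ← intervalIntegral.integral_div]
      refine integral_congr ?_
      intro s hs
      rw [Set.uIcc_of_le ht] at hs
      dsimp only
      rw [convf s hs.1, ih s hs.1]
      ring
    rw [E1, E2] at P
    rw [conv t ht, convf t ht, ih t ht] at P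
    have hc : ((n:ℝ) + 1) ≠ 0 := by positivity
    have P2 : (∫ s in (0:ℝ)..t, h s * (∫ u in (0:ℝ)..s, h u) ^ (n + 1)) * ((n:ℝ) + 2)
        = (∫ s in (0:ℝ)..t, h s) ^ (n + 2) := by
      field_simp at P
      rw [← pow_succ] at P
      linarith
    push_cast
    rw [eq_div_iff (by positivity : ((n:ℝ) + 1 + 1) ≠ 0),
      show ((n:ℝ) + 1 + 1) = (n:ℝ) + 2 from by ring]
    exact P2
private lemma keyAbs_nonneg {h : ℝ → ℝ} (hint : ∀ a b : ℝ, IntervalIntegrable h volume a b)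
    (h0 : ∀ s, 0 ≤ h s) (n : ℕ) {t : ℝ} (ht : 0 ≤ t) :
    |∫ s in (0:ℝ)..t, h s * |∫ u in (0:ℝ)..s, h u| ^ n|
      = |∫ s in (0:ℝ)..t, h s| ^ (n + 1) / (n + 1) := by
  have hGnn : ∀ s : ℝ, 0 ≤ s → 0 ≤ ∫ u in (0:ℝ)..s, h u :=
    fun s hs => integral_nonneg hs (fun u _ => h0 u)
  have e : ∫ s in (0:ℝ)..t, h s * |∫ u in (0:ℝ)..s, h u| ^ n
      = ∫ s in (0:ℝ)..t, h s * (∫ u in (0:ℝ)..s, h u) ^ n := by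
    refine integral_congr (fun s hs => ?_)
    rw [Set.uIcc_of_le ht] at hs
    rw [abs_of_nonneg (hGnn s hs.1)]
  rw [e, keyEq_aux hint n t ht, abs_of_nonneg (hGnn t ht),
    abs_of_nonneg (div_nonneg (pow_nonneg (hGnn t ht) _) (by positivity))]

private lemma keyAbs {h : ℝ → ℝ} (hint : ∀ a b : ℝ, IntervalIntegrable h volume a b)
    (h0 : ∀ s, 0 ≤ h s) (n : ℕ) (t : ℝ) :
    |∫ s in (0:ℝ)..t, h s * |∫ u in (0:ℝ)..s, h u| ^ n|
      = |∫ s in (0:ℝ)..t, h s| ^ (n + 1) / (n + 1) := by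
  rcases le_total 0 t with ht | ht
  · exact keyAbs_nonneg hint h0 n ht
  · have hint' : ∀ a b : ℝ, IntervalIntegrable (fun x => h (-x)) volume a b := by
      intro a b
      have := (IntervalIntegrable.iff_comp_neg (f := h) (a := -a) (b := -b)).mp (hint _ _)
      simpa using this
    have h0' : ∀ s, 0 ≤ h (-s) := fun s => h0 _
    have cneg : ∀ (F : ℝ → ℝ) (x : ℝ), ∫ s in (0:ℝ)..(-x), F s = -∫ s in (0:ℝ)..x, F (-s) := by
      intro F x
      rw [integral_comp_neg, neg_zero, integral_symm]
    have ht' : 0 ≤ -t := neg_nonneg.2 ht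
    have habs : ∀ x : ℝ, |∫ u in (0:ℝ)..(-x), h u| = |∫ u in (0:ℝ)..x, h (-u)| := by
      intro x
      rw [cneg h x, abs_neg]
    calc |∫ s in (0:ℝ)..t, h s * |∫ u in (0:ℝ)..s, h u| ^ n|
        = |∫ s in (0:ℝ)..(-(-t)), h s * |∫ u in (0:ℝ)..s, h u| ^ n| := by rw [neg_neg]
      _ = |∫ s in (0:ℝ)..(-t), h (-s) * |∫ u in (0:ℝ)..(-s), h u| ^ n| := by
          rw [cneg (fun s => h s * |∫ u in (0:ℝ)..s, h u| ^ n) (-t), abs_neg]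
      _ = |∫ s in (0:ℝ)..(-t), h (-s) * |∫ u in (0:ℝ)..s, h (-u)| ^ n| := by
          congr 1
          refine integral_congr (fun s _ => ?_)
          rw [habs s]
      _ = |∫ s in (0:ℝ)..(-t), h (-s)| ^ (n + 1) / (n + 1) :=
          keyAbs_nonneg hint' h0' n ht'
      _ = |∫ s in (0:ℝ)..t, h s| ^ (n + 1) / (n + 1) := by
          rw [← habs (-t), neg_neg]

private lemma abs_integral_mono {f g : ℝ → ℝ} {t : ℝ}
    (hf : IntervalIntegrable f volume 0 t) (hg : IntervalIntegrable g volume 0 t)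
    (h0 : ∀ s ∈ Set.uIcc (0:ℝ) t, 0 ≤ f s) (hfg : ∀ s ∈ Set.uIcc (0:ℝ) t, f s ≤ g s) :
    |∫ s in (0:ℝ)..t, f s| ≤ |∫ s in (0:ℝ)..t, g s| := by
  rcases le_total 0 t with ht | ht
  · rw [Set.uIcc_of_le ht] at h0 hfg
    have h1 : (0:ℝ) ≤ ∫ s in (0:ℝ)..t, f s := integral_nonneg ht h0
    have h2 : ∫ s in (0:ℝ)..t, f s ≤ ∫ s in (0:ℝ)..t, g s := integral_mono_on ht hf hg hfg
    rw [abs_of_nonneg h1]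
    exact h2.trans (le_abs_self _)
  · rw [Set.uIcc_of_ge ht] at h0 hfg
    rw [integral_symm t 0 (f := f), integral_symm t 0 (f := g), abs_neg, abs_neg]
    have h1 : (0:ℝ) ≤ ∫ s in t..(0:ℝ), f s := integral_nonneg ht h0
    have h2 : ∫ s in t..(0:ℝ), f s ≤ ∫ s in t..(0:ℝ), g s :=
      integral_mono_on ht hf.symm hg.symm hfg
    rw [abs_of_nonneg h1]
    exact h2.trans (le_abs_self _)

set_option synthInstance.maxHeartbeats 1000000

section Operator

variable {E : Type*} [NormedAddCommGroup E] [NormedSpace ℂ E] [CompleteSpace E]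

private noncomputable def picard (H : ℝ → E →L[ℂ] E) : ℕ → ℝ → E →L[ℂ] E
  | 0 => fun _ => 1
  | (n+1) => fun t => 1 - Complex.I • ∫ s in (0:ℝ)..t, (H s).comp (picard H n s)

private lemma picard_succ (H : ℝ → E →L[ℂ] E) (n : ℕ) (t : ℝ) :
    picard H (n+1) t = 1 - Complex.I • ∫ s in (0:ℝ)..t, (H s).comp (picard H n s) := rfl

private lemma integrable_comp {H : ℝ → E →L[ℂ] E}
    (hHint : ∀ a b : ℝ, IntervalIntegrable H volume a b)
    {V : ℝ → E →L[ℂ] E} {a b C : ℝ}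
    (hVm : AEStronglyMeasurable V (volume.restrict (Set.uIoc a b)))
    (hVb : ∀ s ∈ Set.uIcc a b, ‖V s‖ ≤ C) :
    IntervalIntegrable (fun s => (H s).comp (V s)) volume a b := by
  have hHm : AEStronglyMeasurable H (volume.restrict (Set.uIoc a b)) :=
    (hHint a b).def'.aestronglyMeasurable
  refine ((hHint a b).norm.mul_const C).mono_fun ?_ ?_
  · have := (ContinuousLinearMap.compL ℂ E E E).aestronglyMeasurable_comp₂ hHm hVm
    simpa only [ContinuousLinearMap.compL_apply] using this
  · refine (ae_restrict_mem measurableSet_uIoc).mono (fun s hs => ?_)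
    have h1 : ‖(H s).comp (V s)‖ ≤ ‖H s‖ * ‖V s‖ := ContinuousLinearMap.opNorm_comp_le _ _
    have h2 : ‖V s‖ ≤ C := hVb s (Set.uIoc_subset_uIcc hs)
    calc ‖(H s).comp (V s)‖ ≤ ‖H s‖ * C :=
          h1.trans (mul_le_mul_of_nonneg_left h2 (norm_nonneg _))
      _ ≤ ‖‖H s‖ * C‖ := le_abs_self _

private lemma integrable_comp' {H : ℝ → E →L[ℂ] E}
    (hHint : ∀ a b : ℝ, IntervalIntegrable H volume a b)
    {V : ℝ → E →L[ℂ] E} (hV : Continuous V) (a b : ℝ) :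
    IntervalIntegrable (fun s => (H s).comp (V s)) volume a b := by
  obtain ⟨C, hC⟩ := (isCompact_uIcc (a := a) (b := b)).exists_bound_of_continuousOn hV.continuousOn
  exact integrable_comp hHint hV.aestronglyMeasurable.restrict hC

private lemma picard_continuous {H : ℝ → E →L[ℂ] E}
    (hHint : ∀ a b : ℝ, IntervalIntegrable H volume a b) :
    ∀ n, Continuous (picard H n) := by
  intro n
  induction n with
  | zero => exact continuous_const
  | succ n ih =>
    have : Continuous fun t => ∫ s in (0:ℝ)..t, (H s).comp (picard H n s) :=
      intervalIntegral.continuous_primitive (fun a b => integrable_comp' hHint ih a b) 0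
    exact continuous_const.sub (by exact this.const_smul Complex.I)

private lemma picard_diff {H : ℝ → E →L[ℂ] E}
    (hHint : ∀ a b : ℝ, IntervalIntegrable H volume a b) :
    ∀ (n : ℕ) (t : ℝ), ‖picard H (n+1) t - picard H n t‖
      ≤ |∫ s in (0:ℝ)..t, ‖H s‖| ^ (n+1) / (Nat.factorial (n+1) : ℝ) := by
  have hnormint : ∀ a b : ℝ, IntervalIntegrable (fun s => ‖H s‖) volume a b :=
    fun a b => (hHint a b).norm
  have hφc : Continuous (fun x : ℝ => |∫ s in (0:ℝ)..x, ‖H s‖|) :=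
    (intervalIntegral.continuous_primitive hnormint 0).abs
  intro n
  induction n with
  | zero =>
    intro t
    have e : (fun s : ℝ => (H s).comp (picard H 0 s)) = H := by
      funext s
      show (H s).comp 1 = H s
      rw [ContinuousLinearMap.one_def, ContinuousLinearMap.comp_id]
    calc ‖picard H (0+1) t - picard H 0 t‖
        = ‖Complex.I • ∫ s in (0:ℝ)..t, (H s).comp (picard H 0 s)‖ := by
          show ‖(1 - Complex.I • _) - 1‖ = _
          rw [sub_sub_cancel_left, norm_neg]
      _ = ‖∫ s in (0:ℝ)..t, H s‖ := by
          rw [e, norm_smul Complex.I (intervalIntegral H 0 t volume), Complex.norm_I, one_mul]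
      _ ≤ |∫ s in (0:ℝ)..t, ‖H s‖| := norm_integral_le_abs_integral_norm
      _ = |∫ s in (0:ℝ)..t, ‖H s‖| ^ (0+1) / (Nat.factorial (0+1) : ℝ) := by
          simp [Nat.factorial]
  | succ n ih =>
    intro t
    have hi1 : IntervalIntegrable (fun s => (H s).comp (picard H (n+1) s)) volume 0 t :=
      integrable_comp' hHint (picard_continuous hHint (n+1)) 0 t
    have hi0 : IntervalIntegrable (fun s => (H s).comp (picard H n s)) volume 0 t :=
      integrable_comp' hHint (picard_continuous hHint n) 0 t
    have e : picard H (n+1+1) t - picard H (n+1) t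
        = -(Complex.I • ∫ s in (0:ℝ)..t,
            ((H s).comp (picard H (n+1) s) - (H s).comp (picard H n s))) := by
      rw [picard_succ, picard_succ, intervalIntegral.integral_sub hi1 hi0, smul_sub]
      abel
    rw [e, norm_neg, norm_smul Complex.I (∫ s in (0:ℝ)..t,
      ((H s).comp (picard H (n+1) s) - (H s).comp (picard H n s))), Complex.norm_I, one_mul]
    refine norm_integral_le_abs_integral_norm.trans ?_
    have key : ∀ s ∈ Set.uIcc (0:ℝ) t,
        ‖(H s).comp (picard H (n+1) s) - (H s).comp (picard H n s)‖
          ≤ (‖H s‖ * |∫ u in (0:ℝ)..s, ‖H u‖| ^ (n+1)) * ((Nat.factorial (n+1) : ℝ))⁻¹ := by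
      intro s _
      rw [← ContinuousLinearMap.comp_sub]
      refine (ContinuousLinearMap.opNorm_comp_le _ _).trans ?_
      calc ‖H s‖ * ‖picard H (n+1) s - picard H n s‖
          ≤ ‖H s‖ * (|∫ u in (0:ℝ)..s, ‖H u‖| ^ (n+1) / (Nat.factorial (n+1) : ℝ)) :=
            mul_le_mul_of_nonneg_left (ih s) (norm_nonneg _)
        _ = (‖H s‖ * |∫ u in (0:ℝ)..s, ‖H u‖| ^ (n+1)) * ((Nat.factorial (n+1) : ℝ))⁻¹ := by
            rw [div_eq_mul_inv]; ring
    refine (abs_integral_mono ((hi1.sub hi0).norm)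
      (((hnormint 0 t).mul_continuousOn ((hφc.pow (n+1)).continuousOn)).mul_const _)
      (fun s _ => norm_nonneg _) key).trans ?_
    simp only [Pi.pow_apply]
    rw [intervalIntegral.integral_mul_const, abs_mul,
      keyAbs hnormint (fun u => norm_nonneg (H u)) (n+1) t,
      abs_of_nonneg (inv_nonneg.2 (Nat.cast_nonneg _ : (0:ℝ) ≤ (Nat.factorial (n+1) : ℝ)))]
    apply le_of_eq
    rw [Nat.factorial_succ (n+1)]
    push_cast
    have h1 : ((n:ℝ) + 1 + 1) ≠ 0 := by positivity
    have h2 : ((Nat.factorial (n+1) : ℝ)) ≠ 0 := by positivity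
    field_simp

private lemma picard_norm_le {H : ℝ → E →L[ℂ] E}
    (hHint : ∀ a b : ℝ, IntervalIntegrable H volume a b) (n : ℕ) (t : ℝ) :
    ‖picard H n t‖ ≤ Real.exp |∫ s in (0:ℝ)..t, ‖H s‖| := by
  have hx : (0:ℝ) ≤ |∫ s in (0:ℝ)..t, ‖H s‖| := abs_nonneg _
  have h1 : dist (picard H 0 t) (picard H n t)
      ≤ ∑ i ∈ Finset.range n, dist (picard H i t) (picard H (i+1) t) :=
    dist_le_range_sum_dist (fun k => picard H k t) n
  have h2 : ∑ i ∈ Finset.range n, dist (picard H i t) (picard H (i+1) t)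
      ≤ ∑ i ∈ Finset.range n,
          |∫ s in (0:ℝ)..t, ‖H s‖| ^ (i+1) / (Nat.factorial (i+1) : ℝ) :=
    Finset.sum_le_sum fun i _ => by
      rw [dist_eq_norm, norm_sub_rev]; exact picard_diff hHint i t
  have h3 : ‖picard H n t‖ ≤ ‖picard H 0 t‖ + dist (picard H 0 t) (picard H n t) := by
    rw [dist_eq_norm]
    exact norm_le_norm_add_norm_sub _ _
  have h4 : ‖picard H 0 t‖ ≤ 1 := by
    show ‖(1 : E →L[ℂ] E)‖ ≤ 1
    rw [ContinuousLinearMap.one_def]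
    exact ContinuousLinearMap.norm_id_le
  have h5 : (1:ℝ) + ∑ i ∈ Finset.range n,
        |∫ s in (0:ℝ)..t, ‖H s‖| ^ (i+1) / (Nat.factorial (i+1) : ℝ)
      = ∑ i ∈ Finset.range (n+1),
          |∫ s in (0:ℝ)..t, ‖H s‖| ^ i / (Nat.factorial i : ℝ) := by
    rw [Finset.sum_range_succ'
      (fun i => |∫ s in (0:ℝ)..t, ‖H s‖| ^ i / (Nat.factorial i : ℝ)) n]
    simp [Nat.factorial, add_comm]
  calc ‖picard H n t‖ ≤ ‖picard H 0 t‖ + dist (picard H 0 t) (picard H n t) := h3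
    _ ≤ 1 + ∑ i ∈ Finset.range n,
          |∫ s in (0:ℝ)..t, ‖H s‖| ^ (i+1) / (Nat.factorial (i+1) : ℝ) :=
        add_le_add h4 (h1.trans h2)
    _ = ∑ i ∈ Finset.range (n+1),
          |∫ s in (0:ℝ)..t, ‖H s‖| ^ i / (Nat.factorial i : ℝ) := h5
    _ ≤ Real.exp |∫ s in (0:ℝ)..t, ‖H s‖| := Real.sum_le_exp_of_nonneg hx (n+1)

end Operator

/-- Existence, uniqueness and continuity of the propagator for locally integrable
generators: the Volterra equation `U(t) = 1 − i ∫₀ᵗ H(s) U(s) ds` has a norm-continuous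
solution with `‖U(t)‖ ≤ exp(∫₀ᵗ ‖H(s)‖ ds)` for `t ≥ 0`, and any locally bounded
measurable solution coincides with it. -/
theorem propagator_exists_unique
    (H : ℝ → E →L[ℂ] E)
    (hHint : ∀ a b : ℝ, IntervalIntegrable H volume a b) :
    ∃ U : ℝ → E →L[ℂ] E,
      Continuous U ∧
      (∀ t : ℝ, U t = 1 - Complex.I • ∫ s in (0:ℝ)..t, (H s).comp (U s)) ∧
      (∀ t : ℝ, 0 ≤ t → ‖U t‖ ≤ Real.exp (∫ s in (0:ℝ)..t, ‖H s‖)) ∧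
      (∀ V : ℝ → E →L[ℂ] E,
        AEStronglyMeasurable V volume →
        (∀ r : ℝ, ∃ C : ℝ, ∀ t ∈ Set.Icc (-r) r, ‖V t‖ ≤ C) →
        (∀ t : ℝ, V t = 1 - Complex.I • ∫ s in (0:ℝ)..t, (H s).comp (V s)) →
        ∀ t : ℝ, V t = U t) := by
  classical
  have hnormint : ∀ a b : ℝ, IntervalIntegrable (fun s => ‖H s‖) volume a b :=
    fun a b => (hHint a b).norm
  set φ : ℝ → ℝ := fun t => |∫ s in (0:ℝ)..t, ‖H s‖| with hφdef
  have hφc : Continuous φ := (intervalIntegral.continuous_primitive hnormint 0).abs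
  have hφ0 : ∀ t, 0 ≤ φ t := fun t => abs_nonneg _
  have hWc : ∀ n, Continuous (picard H n) := picard_continuous hHint
  have hdist : ∀ t n, dist (picard H n t) (picard H (n+1) t)
      ≤ φ t ^ (n+1) / (Nat.factorial (n+1) : ℝ) := fun t n => by
    rw [dist_eq_norm, norm_sub_rev]; exact picard_diff hHint n t
  have hsum : ∀ x : ℝ, Summable (fun n : ℕ => x ^ (n+1) / (Nat.factorial (n+1) : ℝ)) :=
    fun x => (summable_nat_add_iff 1).2 (Real.summable_pow_div_factorial x)
  have hcauchy : ∀ t, CauchySeq (fun n => picard H n t) :=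
    fun t => cauchySeq_of_dist_le_of_summable _ (hdist t) (hsum (φ t))
  have hex : ∀ t, ∃ L : E →L[ℂ] E, Tendsto (fun n => picard H n t) atTop (𝓝 L) :=
    fun t => cauchySeq_tendsto_of_complete (hcauchy t)
  choose U hU using hex
  have htail : ∀ t n, dist (picard H n t) (U t)
      ≤ ∑' m, φ t ^ (n + m + 1) / (Nat.factorial (n + m + 1) : ℝ) := fun t n =>
    dist_le_tsum_of_dist_le_of_tendsto
      (fun k => φ t ^ (k+1) / (Nat.factorial (k+1) : ℝ)) (hdist t) (hsum (φ t)) (hU t) n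
  have hbound : ∀ s : Set ℝ, IsCompact s → s.Nonempty →
      ∃ M : ℝ, 0 ≤ M ∧ ∀ x ∈ s, φ x ≤ M := by
    intro s hs hne
    obtain ⟨x, hxs, hx⟩ := hs.exists_isMaxOn hne hφc.continuousOn
    exact ⟨φ x, hφ0 x, fun y hy => hx hy⟩
  have hsum' : ∀ (x : ℝ) (n : ℕ),
      Summable (fun m : ℕ => x ^ (n + m + 1) / (Nat.factorial (n + m + 1) : ℝ)) := by
    intro x n
    refine ((summable_nat_add_iff (n+1)).2 (Real.summable_pow_div_factorial x)).congr ?_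
    intro m
    have hmn : m + (n + 1) = n + m + 1 := by ring
    rw [hmn]
  have htailM : ∀ M : ℝ,
      Tendsto (fun n => ∑' m, M ^ (n + m + 1) / (Nat.factorial (n + m + 1) : ℝ))
        atTop (𝓝 0) := by
    intro M
    have h1 : Tendsto
        (fun i => ∑' m : ℕ, M ^ (m + i) / (Nat.factorial (m + i) : ℝ)) atTop (𝓝 0) :=
      tendsto_sum_nat_add fun k => M ^ k / (Nat.factorial k : ℝ)
    have h2 := h1.comp (tendsto_add_atTop_nat 1)
    refine h2.congr (fun n => ?_)
    show (∑' m : ℕ, M ^ (m + (n+1)) / (Nat.factorial (m + (n+1)) : ℝ)) = _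
    exact tsum_congr fun m => by rw [show m + (n+1) = n + m + 1 by ring]
  have hdistle : ∀ (n : ℕ) (t M : ℝ), φ t ≤ M →
      dist (picard H n t) (U t)
        ≤ ∑' m, M ^ (n + m + 1) / (Nat.factorial (n + m + 1) : ℝ) := by
    intro n t M hφM
    refine (htail t n).trans (Summable.tsum_le_tsum (fun m => ?_) (hsum' (φ t) n) (hsum' M n))
    gcongr
  -- Continuity
  have hUc : Continuous U := by
    rw [continuous_iff_continuousAt]
    intro t₀
    have hr : (0:ℝ) < |t₀| + 1 := by positivity
    have hne : (Set.Icc (-(|t₀|+1)) (|t₀|+1)).Nonempty :=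
      ⟨0, Set.mem_Icc.2 ⟨by linarith [abs_nonneg t₀], by linarith [abs_nonneg t₀]⟩⟩
    obtain ⟨M, hM0, hM⟩ := hbound _ isCompact_Icc hne
    have hTU : TendstoUniformlyOn (fun n t => picard H n t) U atTop
        (Set.Icc (-(|t₀|+1)) (|t₀|+1)) := by
      rw [Metric.tendstoUniformlyOn_iff]
      intro ε hε
      filter_upwards [(tendsto_order.1 (htailM M)).2 ε hε] with n hn x hx
      calc dist (U x) (picard H n x) = dist (picard H n x) (U x) := dist_comm _ _
        _ ≤ ∑' m, M ^ (n + m + 1) / (Nat.factorial (n + m + 1) : ℝ) :=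
            hdistle n x M (hM x hx)
        _ < ε := hn
    have hcont : ContinuousOn U (Set.Icc (-(|t₀|+1)) (|t₀|+1)) :=
      hTU.continuousOn (Filter.Eventually.of_forall fun n => (hWc n).continuousOn).frequently
    have hmem : Set.Icc (-(|t₀|+1)) (|t₀|+1) ∈ 𝓝 t₀ :=
      Icc_mem_nhds (by linarith [neg_abs_le t₀]) (by linarith [le_abs_self t₀])
    exact hcont.continuousAt hmem
  -- convergence of the integrals
  have hUerr : ∀ t : ℝ, Tendsto (fun n => ∫ s in (0:ℝ)..t, (H s).comp (picard H n s))
      atTop (𝓝 (∫ s in (0:ℝ)..t, (H s).comp (U s))) := by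
    intro t
    obtain ⟨M, hM0, hM⟩ := hbound (Set.uIcc 0 t) isCompact_uIcc ⟨0, Set.left_mem_uIcc⟩
    have hT0 : ∀ n : ℕ, (0:ℝ) ≤ ∑' m, M ^ (n + m + 1) / (Nat.factorial (n + m + 1) : ℝ) :=
      fun n => tsum_nonneg fun m => by positivity
    rw [tendsto_iff_dist_tendsto_zero]
    refine squeeze_zero (fun n => dist_nonneg)
      (g := fun n => φ t * ∑' m, M ^ (n + m + 1) / (Nat.factorial (n + m + 1) : ℝ)) ?_ ?_
    · intro n
      have hint_n : IntervalIntegrable (fun s => (H s).comp (picard H n s)) volume 0 t :=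
        integrable_comp' hHint (hWc n) 0 t
      have hint_U : IntervalIntegrable (fun s => (H s).comp (U s)) volume 0 t :=
        integrable_comp' hHint hUc 0 t
      rw [dist_eq_norm, ← intervalIntegral.integral_sub hint_n hint_U]
      have key : ∀ s ∈ Set.uIcc (0:ℝ) t,
          ‖(H s).comp (picard H n s) - (H s).comp (U s)‖
            ≤ ‖H s‖ * ∑' m, M ^ (n + m + 1) / (Nat.factorial (n + m + 1) : ℝ) := by
        intro s hs
        rw [← ContinuousLinearMap.comp_sub]
        refine (ContinuousLinearMap.opNorm_comp_le _ _).trans ?_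
        have h5 : ‖picard H n s - U s‖
            ≤ ∑' m, M ^ (n + m + 1) / (Nat.factorial (n + m + 1) : ℝ) := by
          rw [← dist_eq_norm]; exact hdistle n s M (hM s hs)
        exact mul_le_mul_of_nonneg_left h5 (norm_nonneg _)
      calc ‖∫ s in (0:ℝ)..t, ((H s).comp (picard H n s) - (H s).comp (U s))‖
          ≤ |∫ s in (0:ℝ)..t, ‖(H s).comp (picard H n s) - (H s).comp (U s)‖| :=
            norm_integral_le_abs_integral_norm
        _ ≤ |∫ s in (0:ℝ)..t,
              ‖H s‖ * ∑' m, M ^ (n + m + 1) / (Nat.factorial (n + m + 1) : ℝ)| :=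
            abs_integral_mono ((hint_n.sub hint_U).norm)
              ((hnormint 0 t).mul_const _) (fun s _ => norm_nonneg _) key
        _ = φ t * ∑' m, M ^ (n + m + 1) / (Nat.factorial (n + m + 1) : ℝ) := by
            rw [intervalIntegral.integral_mul_const, abs_mul, abs_of_nonneg (hT0 n)]
    · have := (htailM M).const_mul (φ t)
      simpa using this
  -- the integral equation
  have hUeq : ∀ t : ℝ, U t = 1 - Complex.I • ∫ s in (0:ℝ)..t, (H s).comp (U s) := by
    intro t
    have h1 : Tendsto (fun n => picard H (n+1) t) atTop (𝓝 (U t)) :=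
      (hU t).comp (tendsto_add_atTop_nat 1)
    have h2 : Tendsto (fun n => picard H (n+1) t) atTop
        (𝓝 (1 - Complex.I • ∫ s in (0:ℝ)..t, (H s).comp (U s))) := by
      have e : (fun n => picard H (n+1) t)
          = fun n => 1 - Complex.I • ∫ s in (0:ℝ)..t, (H s).comp (picard H n s) := rfl
      rw [e]
      exact tendsto_const_nhds.sub ((hUerr t).const_smul _)
    exact tendsto_nhds_unique h1 h2
  -- norm bound
  have hUbd : ∀ t : ℝ, 0 ≤ t → ‖U t‖ ≤ Real.exp (∫ s in (0:ℝ)..t, ‖H s‖) := by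
    intro t ht
    have h3 : ‖U t‖ ≤ Real.exp (φ t) :=
      le_of_tendsto (hU t).norm
        (Filter.Eventually.of_forall fun n => picard_norm_le hHint n t)
    have : φ t = ∫ s in (0:ℝ)..t, ‖H s‖ := by
      simp only [hφdef]
      exact abs_of_nonneg (integral_nonneg ht fun u _ => norm_nonneg _)
    rwa [this] at h3
  refine ⟨U, hUc, hUeq, hUbd, ?_⟩
  -- uniqueness
  intro V hVmeas hVloc hVeq t
  obtain ⟨CV, hCV⟩ := hVloc |t|
  have hsub : Set.uIcc (0:ℝ) t ⊆ Set.Icc (-|t|) |t| := by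
    rcases le_total 0 t with h | h
    · rw [Set.uIcc_of_le h]
      exact Set.Icc_subset_Icc (by simpa using abs_nonneg t) (le_abs_self t)
    · rw [Set.uIcc_of_ge h]
      exact Set.Icc_subset_Icc (neg_abs_le t) (abs_nonneg t)
  obtain ⟨CU, hCU⟩ := (isCompact_uIcc (a := (0:ℝ)) (b := t)).exists_bound_of_continuousOn
    hUc.continuousOn
  set C : ℝ := max (CV + CU) 0 with hCdef
  have hC0 : (0:ℝ) ≤ C := le_max_right _ _
  have hbase : ∀ s ∈ Set.uIcc (0:ℝ) t, ‖V s - U s‖ ≤ C := fun s hs =>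
    (norm_sub_le _ _).trans ((add_le_add (hCV s (hsub hs)) (hCU s hs)).trans (le_max_left _ _))
  have main : ∀ n : ℕ, ∀ s ∈ Set.uIcc (0:ℝ) t,
      ‖V s - U s‖ ≤ C * (φ s ^ n / (Nat.factorial n : ℝ)) := by
    intro n
    induction n with
    | zero => intro s hs; simpa using hbase s hs
    | succ n ih =>
      intro s hs
      have hsub2 : Set.uIcc (0:ℝ) s ⊆ Set.uIcc (0:ℝ) t :=
        Set.uIcc_subset_uIcc Set.left_mem_uIcc hs
      have hintV : IntervalIntegrable (fun u => (H u).comp (V u)) volume 0 s :=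
        integrable_comp hHint hVmeas.restrict (fun u hu => hCV u (hsub (hsub2 hu)))
      have hintU : IntervalIntegrable (fun u => (H u).comp (U u)) volume 0 s :=
        integrable_comp' hHint hUc 0 s
      have heq : V s - U s = Complex.I • ((∫ u in (0:ℝ)..s, (H u).comp (U u))
          - ∫ u in (0:ℝ)..s, (H u).comp (V u)) := by
        rw [hVeq s, hUeq s, smul_sub]
        abel
      rw [heq, norm_smul Complex.I ((∫ u in (0:ℝ)..s, (H u).comp (U u))
          - ∫ u in (0:ℝ)..s, (H u).comp (V u)), Complex.norm_I, one_mul,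
        ← intervalIntegral.integral_sub hintU hintV]
      have key : ∀ u ∈ Set.uIcc (0:ℝ) s,
          ‖(H u).comp (U u) - (H u).comp (V u)‖
            ≤ (‖H u‖ * φ u ^ n) * (C / (Nat.factorial n : ℝ)) := by
        intro u hu
        rw [← ContinuousLinearMap.comp_sub]
        refine (ContinuousLinearMap.opNorm_comp_le _ _).trans ?_
        have h5 : ‖U u - V u‖ ≤ C * (φ u ^ n / (Nat.factorial n : ℝ)) := by
          rw [norm_sub_rev]; exact ih u (hsub2 hu)
        calc ‖H u‖ * ‖U u - V u‖
            ≤ ‖H u‖ * (C * (φ u ^ n / (Nat.factorial n : ℝ))) :=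
              mul_le_mul_of_nonneg_left h5 (norm_nonneg _)
          _ = (‖H u‖ * φ u ^ n) * (C / (Nat.factorial n : ℝ)) := by ring
      calc ‖∫ u in (0:ℝ)..s, ((H u).comp (U u) - (H u).comp (V u))‖
          ≤ |∫ u in (0:ℝ)..s, ‖(H u).comp (U u) - (H u).comp (V u)‖| :=
            norm_integral_le_abs_integral_norm
        _ ≤ |∫ u in (0:ℝ)..s, (‖H u‖ * φ u ^ n) * (C / (Nat.factorial n : ℝ))| :=
            abs_integral_mono ((hintU.sub hintV).norm)
              (((hnormint 0 s).mul_continuousOn ((hφc.pow n).continuousOn)).mul_const _)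
              (fun u _ => norm_nonneg _) key
        _ = |∫ u in (0:ℝ)..s, ‖H u‖ * φ u ^ n| * (C / (Nat.factorial n : ℝ)) := by
            rw [intervalIntegral.integral_mul_const, abs_mul,
              abs_of_nonneg (div_nonneg hC0 (Nat.cast_nonneg _))]
        _ = (φ s ^ (n+1) / ((n:ℝ)+1)) * (C / (Nat.factorial n : ℝ)) := by
            rw [keyAbs hnormint (fun u => norm_nonneg (H u)) n s]
        _ = C * (φ s ^ (n+1) / (Nat.factorial (n+1) : ℝ)) := by
            rw [Nat.factorial_succ]
            push_cast
            have h1 : ((n:ℝ) + 1) ≠ 0 := by positivity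
            have h2 : ((Nat.factorial n : ℝ)) ≠ 0 := by positivity
            field_simp
  have hlim : Tendsto (fun n => C * (φ t ^ n / (Nat.factorial n : ℝ))) atTop (𝓝 0) := by
    have := (FloorSemiring.tendsto_pow_div_factorial_atTop (φ t)).const_mul C
    simpa using this
  have h0 : ‖V t - U t‖ ≤ 0 :=
    ge_of_tendsto hlim (Filter.Eventually.of_forall fun n => main n t Set.right_mem_uIcc)
  have := le_antisymm h0 (norm_nonneg _)
  rwa [norm_eq_zero, sub_eq_zero] at this
end

section
/- Unitarity of the propagator: Let H : ℝ → B(ℋ) be a locally integrable map with H(t) self-adjoint for every t, and let U : ℝ → B(ℋ) be the norm-continuous solution of U(t) = 1 − i ∫₀ᵗ H(s) U(s) ds. Then U(t) is unitary for every t: U(t)* U(t) = U(t) U(t)* = 1. -/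
open MeasureTheory intervalIntegral

section Helpers

variable {A : Type*} [NormedRing A]

/-- Product of integrable functions is integrable on the product measure. -/
lemma aux_integrable_mul_prod {α β : Type*} [MeasurableSpace α] [MeasurableSpace β]
    {μ : Measure α} {ν : Measure β} [SFinite μ] [SFinite ν] {f : α → A} {g : β → A}
    (hf : Integrable f μ) (hg : Integrable g ν) :
    Integrable (fun z : α × β => f z.1 * g z.2) (μ.prod ν) := by
  have hm : AEStronglyMeasurable (fun z : α × β => f z.1 * g z.2) (μ.prod ν) :=
    hf.aestronglyMeasurable.comp_fst.mul hg.aestronglyMeasurable.comp_snd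
  refine (integrable_prod_iff hm).2 ⟨Filter.Eventually.of_forall fun x => hg.const_mul (f x), ?_⟩
  refine (hf.norm.mul_const (∫ y, ‖g y‖ ∂ν)).mono hm.norm.integral_prod_right'
    (Filter.Eventually.of_forall fun x => ?_)
  rw [Real.norm_of_nonneg (integral_nonneg fun y => norm_nonneg _)]
  calc ∫ y, ‖f x * g y‖ ∂ν ≤ ∫ y, ‖f x‖ * ‖g y‖ ∂ν :=
        integral_mono_of_nonneg (Filter.Eventually.of_forall fun y => norm_nonneg _)
          (hg.norm.const_mul _) (Filter.Eventually.of_forall fun y => norm_mul_le _ _)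
    _ = ‖f x‖ * ∫ y, ‖g y‖ ∂ν := integral_const_mul _ _
    _ ≤ ‖‖f x‖ * ∫ y, ‖g y‖ ∂ν‖ := le_abs_self _

variable [NormedSpace ℝ A] [SMulCommClass ℝ A A] [IsScalarTower ℝ A A] [CompleteSpace A]

lemma aux_integral_mul_const {α : Type*} [MeasurableSpace α] {μ : Measure α} {f : α → A}
    (hf : Integrable f μ) (c : A) : ∫ x, f x * c ∂μ = (∫ x, f x ∂μ) * c := by
  simpa using (((ContinuousLinearMap.mul ℝ A).flip c).integral_comp_comm hf)

lemma aux_integral_const_mul {α : Type*} [MeasurableSpace α] {μ : Measure α} {f : α → A}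
    (hf : Integrable f μ) (c : A) : ∫ x, c * f x ∂μ = c * ∫ x, f x ∂μ := by
  simpa using ((ContinuousLinearMap.mul ℝ A c).integral_comp_comm hf)

/-- Fubini-type identity: the product of two integrals over `Ioc 0 t` as a single integral. -/
lemma aux_mul_integral {f g : ℝ → A} {t : ℝ}
    (hf : IntegrableOn f (Set.Ioc 0 t)) (hg : IntegrableOn g (Set.Ioc 0 t)) :
    (∫ r in Set.Ioc (0:ℝ) t, f r) * (∫ s in Set.Ioc (0:ℝ) t, g s)
      = ∫ s in Set.Ioc (0:ℝ) t,
          ((∫ r in Set.Ioc (0:ℝ) s, f r) * g s + f s * (∫ r in Set.Ioc (0:ℝ) s, g r)) := by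
  set μ : Measure ℝ := volume.restrict (Set.Ioc (0:ℝ) t) with hμ
  have hP : Integrable (fun z : ℝ × ℝ => f z.1 * g z.2) (μ.prod μ) :=
    aux_integrable_mul_prod hf hg
  set S : Set (ℝ × ℝ) := {p | p.1 < p.2} with hSdef
  have hS : MeasurableSet S := measurableSet_lt measurable_fst measurable_snd
  have hP1 : Integrable (S.indicator fun z : ℝ × ℝ => f z.1 * g z.2) (μ.prod μ) :=
    hP.indicator hS
  have hP2 : Integrable (Sᶜ.indicator fun z : ℝ × ℝ => f z.1 * g z.2) (μ.prod μ) :=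
    hP.indicator hS.compl
  -- inner slice computations
  have inner1 : ∀ y ∈ Set.Ioc (0:ℝ) t,
      (∫ x, S.indicator (fun z : ℝ × ℝ => f z.1 * g z.2) (x, y) ∂μ)
        = (∫ r in Set.Ioc (0:ℝ) y, f r) * g y := by
    intro y hy
    have h1 : (fun x => S.indicator (fun z : ℝ × ℝ => f z.1 * g z.2) (x, y))
        = (Set.Iio y).indicator (fun x => f x * g y) := by
      funext x
      by_cases h : x < y <;> simp [Set.indicator_apply, hSdef, h]
    rw [h1, MeasureTheory.integral_indicator measurableSet_Iio, hμ,
      Measure.restrict_restrict measurableSet_Iio]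
    have h2 : Set.Iio y ∩ Set.Ioc 0 t = Set.Ioo 0 y := by
      ext x
      simp only [Set.mem_inter_iff, Set.mem_Iio, Set.mem_Ioc, Set.mem_Ioo]
      exact ⟨fun h => ⟨h.2.1, h.1⟩, fun h => ⟨h.2, h.1, h.2.le.trans hy.2⟩⟩
    rw [h2, ← integral_Ioc_eq_integral_Ioo]
    exact aux_integral_mul_const (hf.mono_set (Set.Ioc_subset_Ioc_right hy.2)) (g y)
  have inner2 : ∀ x ∈ Set.Ioc (0:ℝ) t,
      (∫ y, Sᶜ.indicator (fun z : ℝ × ℝ => f z.1 * g z.2) (x, y) ∂μ)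
        = f x * (∫ r in Set.Ioc (0:ℝ) x, g r) := by
    intro x hx
    have h1 : (fun y => Sᶜ.indicator (fun z : ℝ × ℝ => f z.1 * g z.2) (x, y))
        = (Set.Iic x).indicator (fun y => f x * g y) := by
      funext y
      by_cases h : x < y
      · simp [Set.indicator_apply, hSdef, h, (h.not_ge : ¬ y ≤ x)]
      · simp [Set.indicator_apply, hSdef, h, (not_lt.1 h : y ≤ x)]
    rw [h1, MeasureTheory.integral_indicator measurableSet_Iic, hμ,
      Measure.restrict_restrict measurableSet_Iic]
    have h2 : Set.Iic x ∩ Set.Ioc 0 t = Set.Ioc 0 x := by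
      ext y
      simp only [Set.mem_inter_iff, Set.mem_Iic, Set.mem_Ioc]
      exact ⟨fun h => ⟨h.2.1, h.1⟩, fun h => ⟨h.2, h.1, h.2.trans hx.2⟩⟩
    rw [h2]
    exact aux_integral_const_mul (hg.mono_set (Set.Ioc_subset_Ioc_right hx.2)) (f x)
  have hI1 : Integrable (fun y => ∫ x, S.indicator (fun z : ℝ × ℝ => f z.1 * g z.2) (x, y) ∂μ) μ :=
    hP1.integral_prod_right
  have hI2 : Integrable (fun x => ∫ y, Sᶜ.indicator (fun z : ℝ × ℝ => f z.1 * g z.2) (x, y) ∂μ) μ :=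
    hP2.integral_prod_left
  calc (∫ r in Set.Ioc (0:ℝ) t, f r) * (∫ s in Set.Ioc (0:ℝ) t, g s)
      = ∫ z, f z.1 * g z.2 ∂(μ.prod μ) := by
        rw [integral_prod _ hP]
        rw [show (fun x => ∫ y, f x * g y ∂μ) = fun x => f x * ∫ y, g y ∂μ from
          funext fun x => aux_integral_const_mul hg (f x)]
        exact (aux_integral_mul_const hf _).symm
    _ = (∫ z, S.indicator (fun z : ℝ × ℝ => f z.1 * g z.2) z ∂(μ.prod μ))
          + ∫ z, Sᶜ.indicator (fun z : ℝ × ℝ => f z.1 * g z.2) z ∂(μ.prod μ) := by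
        rw [← integral_add hP1 hP2]
        refine integral_congr_ae (Filter.Eventually.of_forall fun z => ?_)
        exact (Set.indicator_self_add_compl_apply S (fun z : ℝ × ℝ => f z.1 * g z.2) z).symm
    _ = (∫ y, (∫ x, S.indicator (fun z : ℝ × ℝ => f z.1 * g z.2) (x, y) ∂μ) ∂μ)
          + ∫ x, (∫ y, Sᶜ.indicator (fun z : ℝ × ℝ => f z.1 * g z.2) (x, y) ∂μ) ∂μ := by
        rw [integral_prod_symm _ hP1, integral_prod _ hP2]
    _ = ∫ s in Set.Ioc (0:ℝ) t,
          ((∫ r in Set.Ioc (0:ℝ) s, f r) * g s + f s * (∫ r in Set.Ioc (0:ℝ) s, g r)) := by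
        rw [← integral_add hI1 hI2]
        refine setIntegral_congr_fun measurableSet_Ioc fun s hs => ?_
        rw [inner1 s hs, inner2 s hs]

lemma aux_alg_id {B : Type*} [Ring B] [Module ℂ B] [SMulCommClass ℂ B B] [IsScalarTower ℂ B B]
    (y h u : B) :
    ((-Complex.I) • (y - 1)) * (h * u) + (y * h) * (Complex.I • (u - 1))
      = Complex.I • (h * u - y * h) := by
  simp only [smul_mul_assoc, mul_smul_comm, sub_mul, mul_sub, one_mul, mul_one, mul_assoc]
  module

end Helpers

variable {E : Type*} [NormedAddCommGroup E] [InnerProductSpace ℂ E] [CompleteSpace E]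
  [TopologicalSpace.SeparableSpace E]

lemma aux_star_intervalIntegral {f : ℝ → E →L[ℂ] E} {a b : ℝ}
    (h : IntervalIntegrable f volume a b) :
    star (∫ s in a..b, f s) = ∫ s in a..b, star (f s) := by
  simpa using (ContinuousLinearMap.intervalIntegral_comp_comm
    ((starL' ℝ : (E →L[ℂ] E) ≃L[ℝ] (E →L[ℂ] E)) : (E →L[ℂ] E) →L[ℝ] (E →L[ℂ] E)) h).symm

lemma aux_isometry_nonneg (H U : ℝ → E →L[ℂ] E)
    (hHint : ∀ a b : ℝ, IntervalIntegrable H volume a b)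
    (hHsa : ∀ t : ℝ, IsSelfAdjoint (H t))
    (hUcont : Continuous U)
    (hU : ∀ t : ℝ, U t = 1 - Complex.I • ∫ s in (0:ℝ)..t, (H s).comp (U s))
    (t : ℝ) (ht : 0 ≤ t) :
    star (U t) * U t = 1 := by
  have hU' : ∀ u : ℝ, U u = 1 - Complex.I • ∫ s in (0:ℝ)..u, H s * U s := by
    simpa only [ContinuousLinearMap.mul_def] using hU
  have hfint : ∀ a b : ℝ, IntervalIntegrable (fun s => H s * U s) volume a b := fun a b =>
    (hHint a b).mul_continuousOn hUcont.continuousOn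
  have hgint : ∀ a b : ℝ, IntervalIntegrable (fun s => star (U s) * H s) volume a b := fun a b =>
    (hHint a b).continuousOn_mul (hUcont.star.continuousOn)
  have hstarf : ∀ s : ℝ, star (H s * U s) = star (U s) * H s := fun s => by
    rw [star_mul, (hHsa s).star_eq]
  have hstarU : ∀ u : ℝ, star (U u) = 1 + Complex.I • ∫ s in (0:ℝ)..u, star (U s) * H s := by
    intro u
    rw [hU' u, star_sub, star_one, star_smul, aux_star_intervalIntegral (hfint 0 u)]
    simp only [hstarf, Complex.star_def, Complex.conj_I, neg_smul, sub_neg_eq_add]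
  set F := ∫ r in Set.Ioc (0:ℝ) t, H r * U r with hF
  set G := ∫ r in Set.Ioc (0:ℝ) t, star (U r) * H r with hG
  have hUt : U t = 1 - Complex.I • F := by
    rw [hU' t, intervalIntegral.integral_of_le ht]
  have hUst : star (U t) = 1 + Complex.I • G := by
    rw [hstarU t, intervalIntegral.integral_of_le ht]
  have hfI : IntegrableOn (fun s => H s * U s) (Set.Ioc 0 t) volume := (hfint 0 t).1
  have hgI : IntegrableOn (fun s => star (U s) * H s) (Set.Ioc 0 t) volume := (hgint 0 t).1
  have key : G * F = ∫ s in Set.Ioc (0:ℝ) t,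
      (Complex.I • (H s * U s - star (U s) * H s)) := by
    rw [hG, hF, aux_mul_integral hgI hfI]
    refine setIntegral_congr_fun measurableSet_Ioc fun s hs => ?_
    have h1 : (∫ r in Set.Ioc (0:ℝ) s, H r * U r) = Complex.I • (U s - 1) := by
      have h := hU' s
      rw [intervalIntegral.integral_of_le hs.1.le] at h
      rw [h, sub_sub_cancel_left, smul_neg, smul_smul, Complex.I_mul_I, neg_one_smul, neg_neg]
    have h2 : (∫ r in Set.Ioc (0:ℝ) s, star (U r) * H r)
        = (-Complex.I) • (star (U s) - 1) := by
      have h := hstarU s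
      rw [intervalIntegral.integral_of_le hs.1.le] at h
      rw [h, add_sub_cancel_left, smul_smul, neg_mul, Complex.I_mul_I, neg_neg, one_smul]
    rw [h1, h2, aux_alg_id]
  have key2 : G * F = Complex.I • (F - G) := by
    rw [key, MeasureTheory.integral_smul, MeasureTheory.integral_sub hfI hgI, hF, hG]
  rw [hUst, hUt]
  have expand : ∀ a b : E →L[ℂ] E, (1 + a) * (1 - b) = 1 - b + a - a * b := by
    intros a b; noncomm_ring
  rw [expand, smul_mul_smul_comm, Complex.I_mul_I, neg_one_smul ℂ, key2, smul_sub]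
  abel

/-- Unitarity of the propagator: if `H(t)` is self-adjoint for every `t` and `U` is the
norm-continuous solution of `U(t) = 1 − i ∫₀ᵗ H(s) U(s) ds`, then `U(t)` is unitary:
`U(t)* U(t) = U(t) U(t)* = 1`. -/
theorem propagator_unitary
    (H U : ℝ → E →L[ℂ] E)
    (hHint : ∀ a b : ℝ, IntervalIntegrable H volume a b)
    (hHsa : ∀ t : ℝ, IsSelfAdjoint (H t))
    (hUcont : Continuous U)
    (hU : ∀ t : ℝ, U t = 1 - Complex.I • ∫ s in (0:ℝ)..t, (H s).comp (U s)) :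
    ∀ t : ℝ, star (U t) * U t = 1 ∧ U t * star (U t) = 1 := by
  have isom : ∀ t : ℝ, star (U t) * U t = 1 := by
    intro t
    rcases le_or_gt 0 t with ht | ht
    · exact aux_isometry_nonneg H U hHint hHsa hUcont hU t ht
    · -- reflect
      have h1 : ∀ a b : ℝ, IntervalIntegrable (fun s => -H (-s)) volume a b := by
        intro a b
        have := (IntervalIntegrable.iff_comp_neg).mp (hHint (-a) (-b))
        have h' := this.neg
        simp only [neg_neg] at h'
        exact h'
      have h2 : ∀ s : ℝ, IsSelfAdjoint (-H (-s)) := fun s => (hHsa (-s)).neg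
      have h3 : Continuous (fun s : ℝ => U (-s)) := hUcont.comp continuous_neg
      have h4 : ∀ u : ℝ, U (-u)
          = 1 - Complex.I • ∫ s in (0:ℝ)..u, (-H (-s)).comp (U (-s)) := by
        intro u
        have heq : (∫ s in (0:ℝ)..u, (-H (-s)).comp (U (-s)))
            = ∫ s in (0:ℝ)..(-u), (H s).comp (U s) := by
          calc (∫ s in (0:ℝ)..u, (-H (-s)).comp (U (-s)))
              = ∫ s in (0:ℝ)..u, -((fun r => (H r).comp (U r)) (-s)) := by
                refine intervalIntegral.integral_congr fun s _ => ?_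
                simp [ContinuousLinearMap.neg_comp]
            _ = -∫ s in (0:ℝ)..u, (fun r => (H r).comp (U r)) (-s) :=
                intervalIntegral.integral_neg
            _ = -∫ s in (-u)..(-(0:ℝ)), (H s).comp (U s) := by
                rw [intervalIntegral.integral_comp_neg (fun r => (H r).comp (U r))]
            _ = ∫ s in (0:ℝ)..(-u), (H s).comp (U s) := by
                rw [neg_zero, ← intervalIntegral.integral_symm]
        rw [heq, ← hU (-u)]
      have := aux_isometry_nonneg (fun s => -H (-s)) (fun s => U (-s)) h1 h2 h3 h4 (-t)
        (by linarith)
      simpa using this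
  intro t
  refine ⟨isom t, ?_⟩
  set P := U t * star (U t) with hPdef
  have hP2 : P * P = P := by
    rw [hPdef, mul_assoc, ← mul_assoc (star (U t)), isom t, one_mul]
  set Q : ℝ → E →L[ℂ] E := fun u => 1 - U u * star (U u) with hQdef
  have hQsa : ∀ u, star (Q u) = Q u := by
    intro u; simp [hQdef, star_sub, star_mul]
  have hQidem : ∀ u, star (U u) * U u = 1 → Q u * Q u = Q u := by
    intro u hiso
    have hP2' : (U u * star (U u)) * (U u * star (U u)) = U u * star (U u) := by
      rw [mul_assoc, ← mul_assoc (star (U u)), hiso, one_mul]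
    have : Q u * Q u = 1 - U u * star (U u) - U u * star (U u)
        + (U u * star (U u)) * (U u * star (U u)) := by
      rw [hQdef]; noncomm_ring
    rw [this, hP2']
    rw [hQdef]; abel
  have hQn : Continuous fun u => ‖Q u‖ :=
    (continuous_const.sub (hUcont.mul hUcont.star)).norm
  have hdich : ∀ u, ‖Q u‖ = 0 ∨ ‖Q u‖ = 1 := by
    intro u
    have h := CStarRing.norm_star_mul_self (x := Q u)
    rw [hQsa u, hQidem u (isom u)] at h
    rcases eq_or_ne (‖Q u‖) 0 with h0 | h0
    · exact Or.inl h0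
    · right
      have : ‖Q u‖ * 1 = ‖Q u‖ * ‖Q u‖ := by rw [mul_one]; exact h
      exact (mul_left_cancel₀ h0 this).symm
  have hU0 : U 0 = 1 := by
    have := hU 0
    simpa using this
  have hQ0 : Q 0 = 0 := by
    rw [hQdef]
    simp [hU0]
  set s : Set ℝ := {u | ‖Q u‖ < 1/2} with hsdef
  have hopen : IsOpen s := isOpen_lt hQn continuous_const
  have hclosed : IsClosed s := by
    have hs' : s = {u | ‖Q u‖ ≤ 1/2} := by
      ext u
      simp only [hsdef, Set.mem_setOf_eq]
      constructor
      · exact le_of_lt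
      · intro hle
        rcases hdich u with h | h
        · rw [h]; norm_num
        · rw [h] at hle; norm_num at hle
    rw [hs']
    exact isClosed_le hQn continuous_const
  have huniv : s = Set.univ := by
    refine IsClopen.eq_univ ⟨hclosed, hopen⟩ ⟨0, ?_⟩
    simp [hsdef, hQ0]
  have hts : t ∈ s := huniv ▸ Set.mem_univ t
  have h0 : ‖Q t‖ = 0 := by
    rcases hdich t with h | h
    · exact h
    · rw [hsdef] at hts
      simp only [Set.mem_setOf_eq, h] at hts
      norm_num at hts
  have hQt : Q t = 0 := norm_eq_zero.mp h0
  have : (1 : E →L[ℂ] E) - U t * star (U t) = 0 := hQt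
  have := sub_eq_zero.mp this
  exact this.symm
end
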